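/- arXiv:2507.22572 — 11 statements merged into one kernel-verified Lean document; each statement's English description precedes it below -/
import Mathlib

section
/- Two self-adjoint operators A and B on a Hilbert space are adjacent (i.e., B - A has rank one) if and only if A ≠ B, A and B are comparable in the Loewner order, and any two self-adjoint operators C, D lying between A and B in the Loewner order are comparable. -/
open Matrix ComplexOrder

namespace AdjacentAux

variable {n : ℕ}

lemma outer_mulVec (u x : Fin n → ℂ) :
    vecMulVec u (star u) *ᵥ x = (star u ⬝ᵥ x) • u := by
  funext i
  simp only [mulVec, dotProduct, vecMulVec_apply, Pi.smul_apply, Pi.star_apply, smul_eq_mul]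
  rw [Finset.sum_mul]
  exact Finset.sum_congr rfl fun j _ => by ring

lemma quad_outer (u x : Fin n → ℂ) :
    star x ⬝ᵥ vecMulVec u (star u) *ᵥ x = star (star u ⬝ᵥ x) * (star u ⬝ᵥ x) := by
  rw [outer_mulVec, dotProduct_smul, star_dotProduct]
  simp [mul_comm]

lemma quad_smul_outer (z : ℂ) (u x : Fin n → ℂ) :
    star x ⬝ᵥ (z • vecMulVec u (star u)) *ᵥ x = z * (star (star u ⬝ᵥ x) * (star u ⬝ᵥ x)) := by
  rw [smul_mulVec, dotProduct_smul, smul_eq_mul, quad_outer]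

lemma smul_outer_psd {z : ℂ} (hz : 0 ≤ z) (u : Fin n → ℂ) :
    (z • vecMulVec u (star u)).PosSemidef := by
  have hzre : z = (z.re : ℂ) := by
    have := (Complex.le_def.mp hz).2
    exact Complex.ext rfl (by simp [← this])
  refine PosSemidef.of_dotProduct_mulVec_nonneg ?_ ?_
  · have h : (vecMulVec u (star u)).IsHermitian := by
      ext i j
      simp [conjTranspose_apply, vecMulVec_apply, mul_comm]
    rw [IsHermitian, conjTranspose_smul, h]
    rw [hzre]
    simp
  · intro x
    rw [quad_smul_outer]
    exact mul_nonneg hz (star_mul_self_nonneg _)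

/-- If `P` is PSD and `z • u uᴴ - P` is PSD with `u` a unit vector,
then `P` is a nonneg multiple of `u uᴴ`. -/
lemma psd_smul_outer_of_le {P : Matrix (Fin n) (Fin n) ℂ} (hP : P.PosSemidef)
    {z : ℂ} {u : Fin n → ℂ} (hu : star u ⬝ᵥ u = 1)
    (hle : (z • vecMulVec u (star u) - P).PosSemidef) :
    ∃ t : ℂ, 0 ≤ t ∧ P = t • vecMulVec u (star u) := by
  have key : ∀ v : Fin n → ℂ, star u ⬝ᵥ v = 0 → P *ᵥ v = 0 := by
    intro v hv
    have h1 : 0 ≤ star v ⬝ᵥ (z • vecMulVec u (star u) - P) *ᵥ v := hle.dotProduct_mulVec_nonneg v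
    rw [sub_mulVec, dotProduct_sub, quad_smul_outer, hv] at h1
    simp only [star_zero, mul_zero, zero_sub] at h1
    have h2 : star v ⬝ᵥ P *ᵥ v ≤ 0 := neg_nonneg.mp h1
    exact (hP.dotProduct_mulVec_zero_iff v).mp (le_antisymm h2 (hP.dotProduct_mulVec_nonneg v))
  set t : ℂ := star u ⬝ᵥ P *ᵥ u with ht
  have htnn : 0 ≤ t := hP.dotProduct_mulVec_nonneg u
  have hPu : P *ᵥ u = t • u := by
    set v : Fin n → ℂ := P *ᵥ u - t • u with hv
    have hov : star u ⬝ᵥ v = 0 := by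
      rw [hv, dotProduct_sub, dotProduct_smul, hu, smul_eq_mul, mul_one, ← ht, sub_self]
    have hPv : P *ᵥ v = 0 := key v hov
    have hsvu : star v ⬝ᵥ u = 0 := by
      rw [star_dotProduct, hov, star_zero]
    have hsvPu : star v ⬝ᵥ (P *ᵥ u) = 0 := by
      rw [dotProduct_mulVec, ← hP.1, ← star_mulVec, hPv, star_zero, zero_dotProduct]
    have hvv : star v ⬝ᵥ v = 0 := by
      calc star v ⬝ᵥ v = star v ⬝ᵥ (P *ᵥ u - t • u) := by rw [← hv]
        _ = star v ⬝ᵥ (P *ᵥ u) - t * (star v ⬝ᵥ u) := by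
            rw [dotProduct_sub, dotProduct_smul, smul_eq_mul]
        _ = 0 := by rw [hsvPu, hsvu, mul_zero, sub_zero]
    have hv0 : v = 0 := dotProduct_star_self_eq_zero.mp hvv
    rw [hv] at hv0
    exact sub_eq_zero.mp hv0
  refine ⟨t, htnn, ?_⟩
  have hvecs : ∀ w : Fin n → ℂ, P *ᵥ w = (t • vecMulVec u (star u)) *ᵥ w := by
    intro w
    set v : Fin n → ℂ := w - (star u ⬝ᵥ w) • u with hv
    have hov : star u ⬝ᵥ v = 0 := by
      rw [hv, dotProduct_sub, dotProduct_smul, hu, smul_eq_mul, mul_one, sub_self]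
    have hPv : P *ᵥ v = 0 := key v hov
    have hw : w = (star u ⬝ᵥ w) • u + v := by rw [hv]; abel
    have hPw : P *ᵥ w = (star u ⬝ᵥ w) • (t • u) := by
      conv_lhs => rw [hw]
      rw [mulVec_add, mulVec_smul, hPu, hPv, add_zero]
    rw [hPw, smul_mulVec, outer_mulVec, smul_comm]
  ext i j
  have h := congrFun (hvecs (Pi.single j 1)) i
  simpa using h

/-- the i-th eigenvector of a Hermitian matrix, as a column of the eigenvector unitary -/
noncomputable def evec {M : Matrix (Fin n) (Fin n) ℂ} (hM : M.IsHermitian) (i : Fin n) :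
    Fin n → ℂ :=
  fun k => (hM.eigenvectorUnitary : Matrix (Fin n) (Fin n) ℂ) k i

lemma evec_ortho {M : Matrix (Fin n) (Fin n) ℂ} (hM : M.IsHermitian) (i j : Fin n) :
    star (evec hM i) ⬝ᵥ evec hM j = if i = j then 1 else 0 := by
  have h : star (hM.eigenvectorUnitary : Matrix (Fin n) (Fin n) ℂ) *
      (hM.eigenvectorUnitary : Matrix (Fin n) (Fin n) ℂ) = 1 :=
    Unitary.star_mul_self_of_mem hM.eigenvectorUnitary.2
  have h2 := congrFun (congrFun h i) j
  rw [Matrix.mul_apply, Matrix.one_apply] at h2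
  rw [← h2]
  simp [evec, dotProduct, Matrix.star_apply]

lemma spectral_sum {M : Matrix (Fin n) (Fin n) ℂ} (hM : M.IsHermitian) :
    M = ∑ i, (hM.eigenvalues i : ℂ) • vecMulVec (evec hM i) (star (evec hM i)) := by
  conv_lhs => rw [hM.spectral_theorem, Unitary.conjStarAlgAut_apply]
  ext a b
  rw [Matrix.mul_apply]
  rw [Matrix.sum_apply]
  refine Finset.sum_congr rfl fun k _ => ?_
  rw [Matrix.mul_diagonal]
  simp only [Matrix.smul_apply, vecMulVec_apply, Pi.star_apply, Matrix.star_apply,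
    Function.comp_apply, smul_eq_mul, evec]
  rw [mul_right_comm]
  exact mul_comm _ _

lemma exists_outer_of_rank_one {M : Matrix (Fin n) (Fin n) ℂ} (hM : M.IsHermitian)
    (h : M.rank = 1) :
    ∃ (c : ℝ) (u : Fin n → ℂ), c ≠ 0 ∧ star u ⬝ᵥ u = 1 ∧
      M = (c : ℂ) • vecMulVec u (star u) := by
  have hcard : Fintype.card {i // hM.eigenvalues i ≠ 0} = 1 := by
    rw [← hM.rank_eq_card_non_zero_eigs, h]
  obtain ⟨⟨i₀, hi₀⟩, huniq⟩ := Fintype.card_eq_one_iff.mp hcard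
  refine ⟨hM.eigenvalues i₀, evec hM i₀, hi₀, by simpa using evec_ortho hM i₀ i₀, ?_⟩
  have hzero : ∀ j, j ≠ i₀ → hM.eigenvalues j = 0 := by
    intro j hj
    by_contra hjne
    exact hj (congrArg Subtype.val (huniq ⟨j, hjne⟩))
  conv_lhs => rw [spectral_sum hM]
  exact Finset.sum_eq_single i₀ (fun j _ hj => by rw [hzero j hj]; simp)
    (fun hmem => absurd (Finset.mem_univ i₀) hmem)

/-- The betweenness property, given `B - A = c • u uᴴ` with `c > 0`. -/
lemma between_aux {A B : Matrix (Fin n) (Fin n) ℂ} {c : ℝ} (hc : 0 < c)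
    {u : Fin n → ℂ} (hu : star u ⬝ᵥ u = 1)
    (hBA : B - A = (c : ℂ) • vecMulVec u (star u)) :
    ∀ C D : Matrix (Fin n) (Fin n) ℂ, C.IsHermitian → D.IsHermitian →
      ((C - A).PosSemidef ∧ (B - C).PosSemidef ∨ (A - C).PosSemidef ∧ (C - B).PosSemidef) →
      ((D - A).PosSemidef ∧ (B - D).PosSemidef ∨ (A - D).PosSemidef ∧ (D - B).PosSemidef) →
      ((D - C).PosSemidef ∨ (C - D).PosSemidef) := by
  intro C D _ _ hC hD
  have himp : ∀ X : Matrix (Fin n) (Fin n) ℂ,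
      (A - X).PosSemidef → (X - B).PosSemidef → False := by
    intro X h1 h2
    have hAB : (A - B).PosSemidef := by
      have := h1.add h2
      rwa [sub_add_sub_cancel] at this
    have hq := hAB.dotProduct_mulVec_nonneg u
    have hBAq : star u ⬝ᵥ (A - B) *ᵥ u = -(c : ℂ) := by
      have h3 : A - B = -((c : ℂ) • vecMulVec u (star u)) := by rw [← hBA]; abel
      rw [h3, neg_mulVec, dotProduct_neg, quad_smul_outer, hu]
      simp
    rw [hBAq] at hq
    have : (0 : ℝ) ≤ -c := by
      have h := (Complex.le_def.mp hq).1
      simpa using h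
    linarith
  rcases hC with hC | hC; swap
  · exact absurd (himp C hC.1 hC.2) id
  rcases hD with hD | hD; swap
  · exact absurd (himp D hD.1 hD.2) id
  obtain ⟨t, ht, hCt⟩ : ∃ t : ℂ, 0 ≤ t ∧ C - A = t • vecMulVec u (star u) := by
    refine psd_smul_outer_of_le (z := (c : ℂ)) hC.1 hu ?_
    have h3 : (c : ℂ) • vecMulVec u (star u) - (C - A) = B - C := by rw [← hBA]; abel
    rw [h3]; exact hC.2
  obtain ⟨s, hs, hDs⟩ : ∃ s : ℂ, 0 ≤ s ∧ D - A = s • vecMulVec u (star u) := by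
    refine psd_smul_outer_of_le (z := (c : ℂ)) hD.1 hu ?_
    have h3 : (c : ℂ) • vecMulVec u (star u) - (D - A) = B - D := by rw [← hBA]; abel
    rw [h3]; exact hD.2
  have htim : t.im = 0 := by simpa using (Complex.le_def.mp ht).2.symm
  have hsim : s.im = 0 := by simpa using (Complex.le_def.mp hs).2.symm
  rcases le_total t.re s.re with hle | hle
  · left
    have hDC : D - C = (s - t) • vecMulVec u (star u) := by
      have h2 : D - C = (D - A) - (C - A) := by abel
      rw [h2, hCt, hDs, ← sub_smul]
    rw [hDC]
    apply smul_outer_psd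
    rw [Complex.le_def]
    refine ⟨by simp [Complex.sub_re]; linarith, by simp [Complex.sub_im, htim, hsim]⟩
  · right
    have hCD : C - D = (t - s) • vecMulVec u (star u) := by
      have h2 : C - D = (C - A) - (D - A) := by abel
      rw [h2, hCt, hDs, ← sub_smul]
    rw [hCD]
    apply smul_outer_psd
    rw [Complex.le_def]
    refine ⟨by simp [Complex.sub_re]; linarith, by simp [Complex.sub_im, htim, hsim]⟩

lemma rank_neg (M : Matrix (Fin n) (Fin n) ℂ) : (-M).rank = M.rank := by
  have h : -M = (-1 : Matrix (Fin n) (Fin n) ℂ) * M := by rw [neg_one_mul]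
  rw [h]
  apply rank_mul_eq_right_of_isUnit_det
  rw [show (-1 : Matrix (Fin n) (Fin n) ℂ) = -(1 : Matrix (Fin n) (Fin n) ℂ) from rfl,
    Matrix.det_neg, Matrix.det_one, mul_one]
  exact (IsUnit.neg isUnit_one).pow _

/-- Backward direction: betweenness implies rank one, assuming `B - A` PSD. -/
lemma rank_one_of_between {A B : Matrix (Fin n) (Fin n) ℂ}
    (hne : A ≠ B) (hpsd : (B - A).PosSemidef)
    (hA : A.IsHermitian)
    (hbet : ∀ C D : Matrix (Fin n) (Fin n) ℂ, C.IsHermitian → D.IsHermitian →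
      ((C - A).PosSemidef ∧ (B - C).PosSemidef ∨ (A - C).PosSemidef ∧ (C - B).PosSemidef) →
      ((D - A).PosSemidef ∧ (B - D).PosSemidef ∨ (A - D).PosSemidef ∧ (D - B).PosSemidef) →
      ((D - C).PosSemidef ∨ (C - D).PosSemidef)) :
    (B - A).rank = 1 := by
  have hMh : (B - A).IsHermitian := hpsd.1
  have hM0 : B - A ≠ 0 := fun h => hne (sub_eq_zero.mp h).symm
  rw [hMh.rank_eq_card_non_zero_eigs]
  by_contra hcard
  rcases lt_or_gt_of_ne hcard with hlt | hgt
  · -- card = 0 : all eigenvalues zero, so M = 0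
    have h0 : Fintype.card {i // hMh.eigenvalues i ≠ 0} = 0 := by omega
    have hemp := Fintype.card_eq_zero_iff.mp h0
    have hall : ∀ i, hMh.eigenvalues i = 0 := by
      intro i
      by_contra hi
      exact hemp.elim ⟨i, hi⟩
    apply hM0
    conv_lhs => rw [spectral_sum hMh]
    apply Finset.sum_eq_zero
    intro i _
    rw [hall i]
    simp
  · -- card ≥ 2 : find two positive eigenvalues
    obtain ⟨⟨i, hi⟩, ⟨j, hj⟩, hij'⟩ := Fintype.one_lt_card_iff.mp hgt
    have hij : i ≠ j := fun h => hij' (Subtype.ext h)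
    have hipos : 0 < hMh.eigenvalues i := lt_of_le_of_ne (hpsd.eigenvalues_nonneg i) (Ne.symm hi)
    have hjpos : 0 < hMh.eigenvalues j := lt_of_le_of_ne (hpsd.eigenvalues_nonneg j) (Ne.symm hj)
    set u := evec hMh i with hudef
    set v := evec hMh j with hvdef
    set Pu : Matrix (Fin n) (Fin n) ℂ := vecMulVec u (star u) with hPu
    set Pv : Matrix (Fin n) (Fin n) ℂ := vecMulVec v (star v) with hPv
    have huu : star u ⬝ᵥ u = 1 := by simpa using evec_ortho hMh i i
    have hvv : star v ⬝ᵥ v = 1 := by simpa using evec_ortho hMh j j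
    have huv : star u ⬝ᵥ v = 0 := by simpa [hij] using evec_ortho hMh i j
    have hvu : star v ⬝ᵥ u = 0 := by simpa [hij.symm] using evec_ortho hMh j i
    have hipsd : ((hMh.eigenvalues i : ℂ) • Pu).PosSemidef :=
      smul_outer_psd (by exact_mod_cast Complex.zero_le_real.mpr hipos.le) u
    have hjpsd : ((hMh.eigenvalues j : ℂ) • Pv).PosSemidef :=
      smul_outer_psd (by exact_mod_cast Complex.zero_le_real.mpr hjpos.le) v
    -- the complements are sums of PSD matrices
    have hrest : ∀ k : Fin n,
        ((B - A) - (hMh.eigenvalues k : ℂ) • vecMulVec (evec hMh k) (star (evec hMh k))).PosSemidef := by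
      intro k
      have hsum : (∑ l ∈ Finset.univ.erase k,
            (hMh.eigenvalues l : ℂ) • vecMulVec (evec hMh l) (star (evec hMh l)))
          + (hMh.eigenvalues k : ℂ) • vecMulVec (evec hMh k) (star (evec hMh k)) = B - A := by
        rw [Finset.sum_erase_add _ _ (Finset.mem_univ k)]
        exact (spectral_sum hMh).symm
      rw [← eq_sub_of_add_eq hsum]
      refine Finset.sum_induction _ _ (fun a b ha hb => ha.add hb) Matrix.PosSemidef.zero ?_
      intro l _
      exact smul_outer_psd
        (by exact_mod_cast Complex.zero_le_real.mpr (hpsd.eigenvalues_nonneg l)) _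
    -- C and D
    set C : Matrix (Fin n) (Fin n) ℂ := A + (hMh.eigenvalues i : ℂ) • Pu with hCdef
    set D : Matrix (Fin n) (Fin n) ℂ := A + (hMh.eigenvalues j : ℂ) • Pv with hDdef
    have hCh : C.IsHermitian := hA.add hipsd.1
    have hDh : D.IsHermitian := hA.add hjpsd.1
    have hCA : C - A = (hMh.eigenvalues i : ℂ) • Pu := by rw [hCdef]; abel
    have hDA : D - A = (hMh.eigenvalues j : ℂ) • Pv := by rw [hDdef]; abel
    have hBC : B - C = (B - A) - (hMh.eigenvalues i : ℂ) • Pu := by rw [hCdef]; abel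
    have hBD : B - D = (B - A) - (hMh.eigenvalues j : ℂ) • Pv := by rw [hDdef]; abel
    have hCbet : (C - A).PosSemidef ∧ (B - C).PosSemidef := by
      refine ⟨hCA ▸ hipsd, ?_⟩
      rw [hBC]
      exact hrest i
    have hDbet : (D - A).PosSemidef ∧ (B - D).PosSemidef := by
      refine ⟨hDA ▸ hjpsd, ?_⟩
      rw [hBD]
      exact hrest j
    have hDCeq : D - C = (hMh.eigenvalues j : ℂ) • Pv - (hMh.eigenvalues i : ℂ) • Pu := by
      rw [hCdef, hDdef]; abel
    rcases hbet C D hCh hDh (Or.inl hCbet) (Or.inl hDbet) with hpos | hpos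
    · have hq := hpos.dotProduct_mulVec_nonneg u
      have : star u ⬝ᵥ (D - C) *ᵥ u = -(hMh.eigenvalues i : ℂ) := by
        rw [hDCeq, sub_mulVec, dotProduct_sub, quad_smul_outer, quad_smul_outer, hvu, huu]
        simp
      rw [this] at hq
      have h := (Complex.le_def.mp hq).1
      simp at h
      linarith
    · have hq := hpos.dotProduct_mulVec_nonneg v
      have : star v ⬝ᵥ (C - D) *ᵥ v = -(hMh.eigenvalues j : ℂ) := by
        have hCDeq : C - D = (hMh.eigenvalues i : ℂ) • Pu - (hMh.eigenvalues j : ℂ) • Pv := by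
          rw [hCdef, hDdef]; abel
        rw [hCDeq, sub_mulVec, dotProduct_sub, quad_smul_outer, quad_smul_outer, huv, hvv]
        simp
      rw [this] at hq
      have h := (Complex.le_def.mp hq).1
      simp at h
      linarith

end AdjacentAux

open AdjacentAux in
theorem adjacent_iff_betweenness {n : ℕ} (hn : 2 ≤ n) {A B : Matrix (Fin n) (Fin n) ℂ}
    (hA : A.IsHermitian) (hB : B.IsHermitian) :
    (B - A).rank = 1 ↔
      A ≠ B ∧
      ((B - A).PosSemidef ∨ (A - B).PosSemidef) ∧
      ∀ C D : Matrix (Fin n) (Fin n) ℂ, C.IsHermitian → D.IsHermitian →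
        ((C - A).PosSemidef ∧ (B - C).PosSemidef ∨ (A - C).PosSemidef ∧ (C - B).PosSemidef) →
        ((D - A).PosSemidef ∧ (B - D).PosSemidef ∨ (A - D).PosSemidef ∧ (D - B).PosSemidef) →
        ((D - C).PosSemidef ∨ (C - D).PosSemidef) := by
  constructor
  · intro h1
    obtain ⟨c, u, hc, hu, hM⟩ := exists_outer_of_rank_one (hB.sub hA) h1
    have hne : A ≠ B := by
      rintro rfl
      rw [sub_self] at h1
      simp [Matrix.rank_zero] at h1
    rcases lt_or_gt_of_ne hc with hneg | hpos
    · -- c < 0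
      have hAB : A - B = ((-c : ℝ) : ℂ) • vecMulVec u (star u) := by
        have : A - B = -(B - A) := by abel
        rw [this, hM]
        push_cast
        rw [neg_smul]
      refine ⟨hne, Or.inr (hAB ▸ smul_outer_psd (Complex.zero_le_real.mpr (by linarith)) u), ?_⟩
      intro C D hC hD h1' h2'
      have := between_aux (A := B) (B := A) (c := -c) (by linarith) hu hAB C D hC hD
        (by tauto) (by tauto)
      tauto
    · -- c > 0
      refine ⟨hne, Or.inl (hM ▸ smul_outer_psd (Complex.zero_le_real.mpr hpos.le) u), ?_⟩
      exact between_aux hpos hu hM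
  · rintro ⟨hne, hcomp | hcomp, hbet⟩
    · exact rank_one_of_between hne hcomp hA hbet
    · have h := rank_one_of_between (A := B) (B := A) hne.symm hcomp hB
        (fun C D hC hD h1 h2 => hbet C D hC hD (by tauto) (by tauto))
      rw [show B - A = -(A - B) by abel, rank_neg]
      exact h
end

section
/- If A and B are Hermitian matrices with A ≤ B and B - A of rank one, then every Hermitian C with A ≤ C ≤ B has the form C = A + pP for some real p ∈ [0, t], where B - A = tP with P a rank-one projection and t > 0. -/
open Matrix ComplexOrder

lemma sandwich_rank_one {n : ℕ} {u : Fin n → ℂ}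
    (hu : ∑ k, star (u k) * u k = 1) {t : ℝ}
    {M : Matrix (Fin n) (Fin n) ℂ} (hM : M.PosSemidef)
    (hMt : ((t : ℂ) • vecMulVec u (star u) - M).PosSemidef) :
    ∃ p : ℝ, 0 ≤ p ∧ p ≤ t ∧ M = (p : ℂ) • vecMulVec u (star u) := by
  have hudot : star u ⬝ᵥ u = 1 := by
    simpa [dotProduct] using hu
  have hPx : ∀ x : Fin n → ℂ,
      (vecMulVec u (star u)) *ᵥ x = (star u ⬝ᵥ x) • u := by
    intro x
    funext i
    simp only [mulVec, dotProduct, vecMulVec_apply, Pi.smul_apply, smul_eq_mul,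
      Pi.star_apply]
    rw [Finset.sum_mul]
    exact Finset.sum_congr rfl fun k _ => by ring
  have key : ∀ x : Fin n → ℂ, star u ⬝ᵥ x = 0 → M *ᵥ x = 0 := by
    intro x hx
    have h1 := hM.dotProduct_mulVec_nonneg x
    have h2 := hMt.dotProduct_mulVec_nonneg x
    have hPz : (vecMulVec u (star u)) *ᵥ x = 0 := by rw [hPx, hx, zero_smul]
    rw [sub_mulVec, smul_mulVec, hPz, smul_zero, zero_sub, dotProduct_neg] at h2
    have h3 : star x ⬝ᵥ M *ᵥ x ≤ 0 := neg_nonneg.mp h2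
    exact (hM.dotProduct_mulVec_zero_iff x).mp (le_antisymm h3 h1)
  have hMx : ∀ x : Fin n → ℂ, M *ᵥ x = (star u ⬝ᵥ x) • (M *ᵥ u) := by
    intro x
    have hy : star u ⬝ᵥ (x - (star u ⬝ᵥ x) • u) = 0 := by
      rw [dotProduct_sub, dotProduct_smul, hudot, smul_eq_mul, mul_one, sub_self]
    have h2 := key _ hy
    rw [mulVec_sub, mulVec_smul, sub_eq_zero] at h2
    exact h2
  set c := star u ⬝ᵥ (M *ᵥ u) with hc
  have h1 : star u ⬝ᵥ (M *ᵥ u - c • u) = 0 := by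
    rw [dotProduct_sub, dotProduct_smul, hudot, smul_eq_mul, mul_one, ← hc, sub_self]
  have h2 : M *ᵥ (M *ᵥ u - c • u) = 0 := key _ h1
  have h3 : star (M *ᵥ u - c • u) ⬝ᵥ (M *ᵥ u) = 0 := by
    have hstar : star (M *ᵥ u - c • u) ᵥ* M = star (M *ᵥ (M *ᵥ u - c • u)) := by
      rw [star_mulVec, hM.1]
    rw [dotProduct_mulVec, hstar, h2, star_zero, zero_dotProduct]
  have h4 : star (M *ᵥ u - c • u) ⬝ᵥ u = 0 := by
    have heq : star (M *ᵥ u - c • u) ⬝ᵥ u = star (star u ⬝ᵥ (M *ᵥ u - c • u)) := by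
      simp only [dotProduct, star_sum, star_mul', star_star, Pi.star_apply]
      exact Finset.sum_congr rfl fun k _ => by ring
    rw [heq, h1, star_zero]
  have h5 : star (M *ᵥ u - c • u) ⬝ᵥ (M *ᵥ u - c • u) = 0 := by
    rw [dotProduct_sub, h3, dotProduct_smul, h4, smul_zero, sub_self]
  have hMu : M *ᵥ u = c • u := sub_eq_zero.mp (dotProduct_star_self_eq_zero.mp h5)
  have hc0 : (0 : ℂ) ≤ c := hM.dotProduct_mulVec_nonneg u
  rw [Complex.le_def] at hc0
  have hcre : c = (c.re : ℂ) := by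
    apply Complex.ext
    · simp
    · simp [← hc0.2]
  have hut := hMt.dotProduct_mulVec_nonneg u
  have hPu : (vecMulVec u (star u)) *ᵥ u = u := by
    rw [hPx, hudot, one_smul]
  rw [sub_mulVec, smul_mulVec, hPu, dotProduct_sub, dotProduct_smul, hudot,
    smul_eq_mul, mul_one, ← hc] at hut
  rw [Complex.le_def] at hut
  refine ⟨c.re, hc0.1, ?_, ?_⟩
  · have := hut.1
    simp only [Complex.zero_re, Complex.sub_re, Complex.ofReal_re] at this
    linarith
  · ext i j
    have h7 := congrFun (hMx (Pi.single j 1)) i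
    have hsj : star u ⬝ᵥ Pi.single j 1 = star (u j) := by
      simp [dotProduct, Pi.single_apply]
    rw [mulVec_single, hsj, hMu] at h7
    simp only [mul_one, Pi.smul_apply, smul_eq_mul, op_smul_eq_mul, Matrix.col_apply] at h7
    rw [Matrix.smul_apply, vecMulVec_apply, Pi.star_apply, smul_eq_mul, h7, ← hcre]
    ring

theorem between_rank_one_segment {n : ℕ} {A B : Matrix (Fin n) (Fin n) ℂ}
    (hA : A.IsHermitian) (hB : B.IsHermitian)
    (hle : (B - A).PosSemidef) (hrk : (B - A).rank = 1) :
    ∃ (t : ℝ) (P : Matrix (Fin n) (Fin n) ℂ),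
      0 < t ∧ P.IsHermitian ∧ P * P = P ∧ P.rank = 1 ∧ B - A = (t : ℂ) • P ∧
      ∀ C : Matrix (Fin n) (Fin n) ℂ, C.IsHermitian →
        (C - A).PosSemidef → (B - C).PosSemidef →
        ∃ p : ℝ, p ∈ Set.Icc (0 : ℝ) t ∧ C = A + (p : ℂ) • P := by
  have hD : (B - A).IsHermitian := hle.1
  have hcard : Fintype.card {i // hD.eigenvalues i ≠ 0} = 1 := by
    rw [← hD.rank_eq_card_non_zero_eigs, hrk]
  obtain ⟨⟨i₀, hi₀⟩, huniq⟩ := Fintype.card_eq_one_iff.mp hcard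
  have hzero : ∀ k, k ≠ i₀ → hD.eigenvalues k = 0 := by
    intro k hk
    by_contra h
    exact hk (congrArg Subtype.val (huniq ⟨k, h⟩))
  have ht : 0 < hD.eigenvalues i₀ := lt_of_le_of_ne (hle.eigenvalues_nonneg i₀) (Ne.symm hi₀)
  set u : Fin n → ℂ := fun i => (hD.eigenvectorUnitary : Matrix (Fin n) (Fin n) ℂ) i i₀
    with hudef
  have hUmem := mem_unitaryGroup_iff'.mp (hD.eigenvectorUnitary).2
  have hu : ∑ k, star (u k) * u k = 1 := by
    have := congrFun (congrFun hUmem i₀) i₀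
    simpa [mul_apply, Matrix.star_apply, hudef] using this
  have hBA : B - A = ((hD.eigenvalues i₀ : ℝ) : ℂ) • vecMulVec u (star u) := by
    ext i j
    conv_lhs => rw [hD.spectral_theorem, Unitary.conjStarAlgAut_apply]
    rw [Matrix.mul_apply, Finset.sum_eq_single i₀]
    · simp only [hudef, mul_diagonal, Function.comp_apply, Matrix.star_apply,
        Matrix.smul_apply, vecMulVec_apply, Pi.star_apply, smul_eq_mul]
      rw [mul_right_comm, mul_comm]
      exact rfl
    · intro k _ hk
      rw [mul_diagonal]
      simp [Function.comp, hzero k hk]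
    · simp
  have hPH : (vecMulVec u (star u)).IsHermitian := by
    ext i j
    simp only [conjTranspose_apply, vecMulVec_apply, Pi.star_apply, star_mul', star_star]
    ring
  have hP2 : vecMulVec u (star u) * vecMulVec u (star u) = vecMulVec u (star u) := by
    ext i j
    simp only [mul_apply, vecMulVec_apply, Pi.star_apply]
    calc ∑ k, u i * star (u k) * (u k * star (u j))
        = (u i * star (u j)) * ∑ k, star (u k) * u k := by
          rw [Finset.mul_sum]; exact Finset.sum_congr rfl fun k _ => by ring
      _ = u i * star (u j) := by rw [hu, mul_one]
  have hrkP : (vecMulVec u (star u)).rank = 1 := by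
    have hsmul : B - A = (((hD.eigenvalues i₀ : ℝ) : ℂ) • (1 : Matrix (Fin n) (Fin n) ℂ))
        * vecMulVec u (star u) := by
      rw [smul_mul, one_mul]; exact hBA
    have hdet : IsUnit ((((hD.eigenvalues i₀ : ℝ) : ℂ))
        • (1 : Matrix (Fin n) (Fin n) ℂ)).det := by
      rw [det_smul, det_one, mul_one, isUnit_iff_ne_zero]
      exact pow_ne_zero _ (by exact_mod_cast ht.ne')
    rw [← rank_mul_eq_right_of_isUnit_det _ _ hdet, ← hsmul, hrk]
  refine ⟨hD.eigenvalues i₀, vecMulVec u (star u), ht, hPH, hP2, hrkP, hBA, ?_⟩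
  intro C hC hCA hBC
  have hsub : ((hD.eigenvalues i₀ : ℝ) : ℂ) • vecMulVec u (star u) - (C - A) = B - C := by
    rw [← hBA]; abel
  obtain ⟨p, hp0, hpt, hMp⟩ := sandwich_rank_one hu hCA (by rw [hsub]; exact hBC)
  refine ⟨p, ⟨hp0, hpt⟩, ?_⟩
  rw [sub_eq_iff_eq_add.mp hMp, add_comm]
end

section
/- If A and B are Hermitian matrices with A ≤ B and rank(B - A) ≥ 2, then there exist Hermitian matrices C, D with A ≤ C ≤ B and A ≤ D ≤ B such that C and D are not comparable in the Loewner order. -/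
open Matrix ComplexOrder

private lemma conj_cancel_aux {m : ℕ} {U D : Matrix (Fin m) (Fin m) ℂ}
    (h1 : star U * U = 1) : star U * (U * D * star U) * (star U)ᴴ = D := by
  have h2 : (star U)ᴴ = U := conjTranspose_conjTranspose U
  rw [h2, show star U * (U * D * star U) * U = (star U * U) * D * (star U * U) by
    noncomm_ring, h1, one_mul, mul_one]

theorem exists_noncomparable_between {n : ℕ} {A B : Matrix (Fin n) (Fin n) ℂ}
    (hA : A.IsHermitian) (hB : B.IsHermitian)
    (hle : (B - A).PosSemidef) (hrk : 2 ≤ (B - A).rank) :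
    ∃ C D : Matrix (Fin n) (Fin n) ℂ, C.IsHermitian ∧ D.IsHermitian ∧
      (C - A).PosSemidef ∧ (B - C).PosSemidef ∧
      (D - A).PosSemidef ∧ (B - D).PosSemidef ∧
      ¬ (D - C).PosSemidef ∧ ¬ (C - D).PosSemidef := by
  classical
  set M := B - A with hMdef
  have hMh : M.IsHermitian := hle.1
  set U : Matrix (Fin n) (Fin n) ℂ := (hMh.eigenvectorUnitary : Matrix (Fin n) (Fin n) ℂ) with hUdef
  have hUU : star U * U = 1 := Matrix.mem_unitaryGroup_iff'.mp hMh.eigenvectorUnitary.2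
  set μ : Fin n → ℝ := hMh.eigenvalues with hμdef
  have hμ0 : ∀ k, 0 ≤ μ k := fun k => hle.eigenvalues_nonneg k
  have hspec : M = U * Matrix.diagonal (fun k => (μ k : ℂ)) * star U :=
    hMh.spectral_theorem
  rw [hMh.rank_eq_card_non_zero_eigs] at hrk
  obtain ⟨⟨i, hi⟩, ⟨j, hj⟩, hij⟩ :=
    Fintype.exists_pair_of_one_lt_card (by omega :
      1 < Fintype.card {k // hMh.eigenvalues k ≠ 0})
  have hijne : i ≠ j := fun h => hij (by simpa [Subtype.ext_iff] using h)
  have hμi : 0 < μ i := lt_of_le_of_ne (hμ0 i) (Ne.symm hi)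
  have hμj : 0 < μ j := lt_of_le_of_ne (hμ0 j) (Ne.symm hj)
  let conj : (Fin n → ℝ) → Matrix (Fin n) (Fin n) ℂ :=
    fun h => U * Matrix.diagonal (fun k => (h k : ℂ)) * star U
  have herm : ∀ h : Fin n → ℝ, (conj h).IsHermitian := by
    intro h
    have : (Matrix.diagonal (fun k => (h k : ℂ))).IsHermitian :=
      Matrix.isHermitian_diagonal_iff.mpr fun k => Complex.conj_ofReal (h k)
    exact Matrix.isHermitian_mul_mul_conjTranspose U this
  have hpsd : ∀ h : Fin n → ℝ, (∀ k, 0 ≤ h k) → (conj h).PosSemidef := by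
    intro h hh
    exact (Matrix.posSemidef_diagonal_iff.mpr (by
      intro k; exact Complex.zero_le_real.mpr (hh k))).mul_mul_conjTranspose_same U
  have hnpsd : ∀ h : Fin n → ℝ, ∀ k, h k < 0 → ¬ (conj h).PosSemidef := by
    intro h k hk hcontra
    have h2 := hcontra.mul_mul_conjTranspose_same (star U)
    rw [show star U * conj h * (star U)ᴴ = Matrix.diagonal (fun k => (h k : ℂ)) from
      conj_cancel_aux hUU] at h2
    have h3 := Matrix.posSemidef_diagonal_iff.mp h2 k
    rw [Complex.zero_le_real] at h3
    linarith
  have hsub : ∀ h₁ h₂ : Fin n → ℝ, conj h₁ - conj h₂ = conj (h₁ - h₂) := by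
    intro h₁ h₂
    show U * Matrix.diagonal (fun k => (h₁ k : ℂ)) * star U
        - U * Matrix.diagonal (fun k => (h₂ k : ℂ)) * star U
        = U * Matrix.diagonal (fun k => ((h₁ - h₂) k : ℂ)) * star U
    rw [← Matrix.sub_mul, ← Matrix.mul_sub, Matrix.diagonal_sub]
    congr 1
    ext k
    push_cast
    simp [Pi.sub_apply]
  let f : Fin n → ℝ := fun k => if k = i then μ i else 0
  let g : Fin n → ℝ := fun k => if k = j then μ j else 0
  refine ⟨A + conj f, A + conj g, hA.add (herm f), hA.add (herm g), ?_, ?_, ?_, ?_, ?_, ?_⟩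
  · rw [add_sub_cancel_left]
    exact hpsd f (fun k => by by_cases hk : k = i <;> simp [f, hk, hμi.le])
  · have e : B - (A + conj f) = conj (μ - f) := by
      rw [show B - (A + conj f) = (B - A) - conj f by abel, ← hMdef, hspec, hsub]
    rw [e]
    exact hpsd _ (fun k => by by_cases hk : k = i <;> simp [f, hk, hμ0 k])
  · rw [add_sub_cancel_left]
    exact hpsd g (fun k => by by_cases hk : k = j <;> simp [g, hk, hμj.le])
  · have e : B - (A + conj g) = conj (μ - g) := by
      rw [show B - (A + conj g) = (B - A) - conj g by abel, ← hMdef, hspec, hsub]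
    rw [e]
    exact hpsd _ (fun k => by by_cases hk : k = j <;> simp [g, hk, hμ0 k])
  · rw [show A + conj g - (A + conj f) = conj g - conj f by abel, hsub]
    exact hnpsd _ i (by simp [f, g, hijne, Ne.symm hijne, hμi])
  · rw [show A + conj f - (A + conj g) = conj f - conj g by abel, hsub]
    exact hnpsd _ j (by simp [f, g, hijne, Ne.symm hijne, hμj])
end

section
/- Let T be an invertible positive definite element of the effect algebra E(H). Then the map τ(A) = (I - T² + T(I + A)⁻¹T)⁻¹ - I is an order isomorphism of E(H) onto the interval [0, T²(2I - T²)⁻¹], with τ(0) = 0 and τ(I) = T²(2I - T²)⁻¹. -/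
open Matrix ComplexOrder

/-- The map `τ(A) = (I - T² + T(I+A)⁻¹T)⁻¹ - I`. -/
noncomputable def tauMap {n : ℕ} (T A : Matrix (Fin n) (Fin n) ℂ) : Matrix (Fin n) (Fin n) ℂ :=
  (1 - T ^ 2 + T * (1 + A)⁻¹ * T)⁻¹ - 1

/-- `A` is an effect: `0 ≤ A ≤ I`. -/
def IsEffect {n : ℕ} (A : Matrix (Fin n) (Fin n) ℂ) : Prop :=
  A.PosSemidef ∧ (1 - A).PosSemidef

variable {n : ℕ}

open scoped MatrixOrder

lemma psd_unit_posDef {M : Matrix (Fin n) (Fin n) ℂ} (h : M.PosSemidef) (hu : IsUnit M) :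
    M.PosDef := by
  exact h.posDef_iff_isUnit.mpr hu

lemma herm_conj_psd {P X : Matrix (Fin n) (Fin n) ℂ} (hP : P.IsHermitian)
    (hX : X.PosSemidef) : (P * X * P).PosSemidef := by
  have := hX.conjTranspose_mul_mul_same P
  rwa [hP.eq] at this

lemma posDef_conj {P X : Matrix (Fin n) (Fin n) ℂ} (hP : P.PosDef) (hX : X.PosDef) :
    (P * X * P).PosDef :=
  psd_unit_posDef (herm_conj_psd hP.1 hX.posSemidef) ((hP.isUnit.mul hX.isUnit).mul hP.isUnit)

lemma conj_psd_iff {P X : Matrix (Fin n) (Fin n) ℂ} (hP : P.PosDef) :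
    (P * X * P).PosSemidef ↔ X.PosSemidef := by
  constructor
  · intro h
    have hd : IsUnit P.det := (Matrix.isUnit_iff_isUnit_det P).mp hP.isUnit
    have h1 : P⁻¹ * P = 1 := Matrix.nonsing_inv_mul P hd
    have h2 : P * P⁻¹ = 1 := Matrix.mul_nonsing_inv P hd
    have e : P⁻¹ * (P * X * P) * P⁻¹ = X := by
      calc P⁻¹ * (P * X * P) * P⁻¹ = (P⁻¹ * P) * X * (P * P⁻¹) := by noncomm_ring
      _ = X := by rw [h1, h2, one_mul, mul_one]
    have := herm_conj_psd hP.1.inv h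
    rwa [e] at this
  · exact herm_conj_psd hP.1

lemma smul_posDef {M : Matrix (Fin n) (Fin n) ℂ} (hM : M.PosDef) {r : ℝ} (hr : 0 < r) :
    ((r : ℂ) • M).PosDef := by
  refine Matrix.PosDef.of_dotProduct_mulVec_pos ?_ ?_
  · have h1 : Mᴴ = M := hM.1
    simp [Matrix.IsHermitian, Matrix.conjTranspose_smul, h1, Complex.conj_ofReal]
  · intro x hx
    have h := hM.dotProduct_mulVec_pos hx
    have e : star x ⬝ᵥ ((r:ℂ) • M) *ᵥ x = (r:ℂ) * (star x ⬝ᵥ M *ᵥ x) := by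
      rw [Matrix.smul_mulVec, dotProduct_smul, smul_eq_mul]
    rw [Complex.pos_iff] at h
    rw [e, Complex.pos_iff]
    refine ⟨?_, ?_⟩
    · rw [Complex.re_ofReal_mul]; exact mul_pos hr h.1
    · rw [Complex.im_ofReal_mul, ← h.2, mul_zero]

lemma sqrt_posDef' {S Y : Matrix (Fin n) (Fin n) ℂ} (hS : S.PosSemidef)
    (hSS : S * S = Y) (hY : Y.PosDef) : S.PosDef := by
  have hSu : IsUnit S := by
    have : IsUnit (S.det * S.det) := by
      rw [← Matrix.det_mul, hSS]; exact (Matrix.isUnit_iff_isUnit_det Y).mp hY.isUnit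
    exact (Matrix.isUnit_iff_isUnit_det S).mpr (isUnit_of_mul_isUnit_left this)
  exact psd_unit_posDef hS hSu

lemma inv_antitone {X Y : Matrix (Fin n) (Fin n) ℂ} (hX : X.PosDef) (hY : Y.PosDef)
    (h : (Y - X).PosSemidef) : (X⁻¹ - Y⁻¹).PosSemidef := by
  obtain ⟨S, hS, hSS⟩ : ∃ S : Matrix (Fin n) (Fin n) ℂ, S.PosDef ∧ S * S = Y :=
    ⟨CFC.sqrt Y, sqrt_posDef' (CFC.sqrt_nonneg Y).posSemidef (CFC.sqrt_mul_sqrt_self Y hY.posSemidef.nonneg) hY,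
      CFC.sqrt_mul_sqrt_self Y hY.posSemidef.nonneg⟩
  have hSd : IsUnit S.det := (Matrix.isUnit_iff_isUnit_det S).mp hS.isUnit
  have hS1 : S⁻¹ * S = 1 := Matrix.nonsing_inv_mul S hSd
  have hS2 : S * S⁻¹ = 1 := Matrix.mul_nonsing_inv S hSd
  have hSinvH : (S⁻¹).IsHermitian := hS.1.inv
  have hZ : (S⁻¹ * X * S⁻¹).PosDef := posDef_conj hS.inv hX
  set Z := S⁻¹ * X * S⁻¹ with hZdef
  have hE : (1 - Z).PosSemidef := by
    have hc := herm_conj_psd hSinvH h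
    have e : S⁻¹ * (Y - X) * S⁻¹ = 1 - Z := by
      have e1 : S⁻¹ * Y * S⁻¹ = 1 := by
        rw [← hSS]
        calc S⁻¹ * (S * S) * S⁻¹ = (S⁻¹ * S) * (S * S⁻¹) := by noncomm_ring
        _ = 1 := by rw [hS1, hS2, one_mul]
      calc S⁻¹ * (Y - X) * S⁻¹ = S⁻¹ * Y * S⁻¹ - S⁻¹ * X * S⁻¹ := by noncomm_ring
      _ = 1 - Z := by rw [e1]
    rwa [e] at hc
  obtain ⟨W, hW, hWW⟩ : ∃ W : Matrix (Fin n) (Fin n) ℂ, W.PosDef ∧ W * W = Z :=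
    ⟨CFC.sqrt Z, sqrt_posDef' (CFC.sqrt_nonneg Z).posSemidef (CFC.sqrt_mul_sqrt_self Z hZ.posSemidef.nonneg) hZ,
      CFC.sqrt_mul_sqrt_self Z hZ.posSemidef.nonneg⟩
  have hWd : IsUnit W.det := (Matrix.isUnit_iff_isUnit_det W).mp hW.isUnit
  have hW1 : W⁻¹ * W = 1 := Matrix.nonsing_inv_mul W hWd
  have hW2 : W * W⁻¹ = 1 := Matrix.mul_nonsing_inv W hWd
  have hWinvH : (W⁻¹).IsHermitian := hW.1.inv
  have key : (Z⁻¹ - 1).PosSemidef := by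
    have hc := herm_conj_psd hWinvH hE
    have e : W⁻¹ * (1 - Z) * W⁻¹ = Z⁻¹ - 1 := by
      have h3 : W⁻¹ * Z * W⁻¹ = 1 := by
        rw [← hWW]
        calc W⁻¹ * (W * W) * W⁻¹ = (W⁻¹ * W) * (W * W⁻¹) := by noncomm_ring
        _ = 1 := by rw [hW1, hW2, one_mul]
      have h4 : W⁻¹ * W⁻¹ = Z⁻¹ := by rw [← hWW, Matrix.mul_inv_rev]
      calc W⁻¹ * (1 - Z) * W⁻¹ = W⁻¹ * W⁻¹ - W⁻¹ * Z * W⁻¹ := by noncomm_ring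
      _ = Z⁻¹ - 1 := by rw [h3, h4]
    rwa [e] at hc
  have hc := herm_conj_psd hSinvH key
  have final : S⁻¹ * (Z⁻¹ - 1) * S⁻¹ = X⁻¹ - Y⁻¹ := by
    have hZinv : Z⁻¹ = S * (X⁻¹ * S) := by
      rw [hZdef, Matrix.mul_inv_rev, Matrix.mul_inv_rev,
        Matrix.nonsing_inv_nonsing_inv S hSd]
    have e1 : S⁻¹ * (S * (X⁻¹ * S)) * S⁻¹ = X⁻¹ := by
      calc S⁻¹ * (S * (X⁻¹ * S)) * S⁻¹ = (S⁻¹ * S) * X⁻¹ * (S * S⁻¹) := by noncomm_ring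
      _ = X⁻¹ := by rw [hS1, hS2, one_mul, mul_one]
    have e2 : S⁻¹ * S⁻¹ = Y⁻¹ := by rw [← hSS, Matrix.mul_inv_rev]
    calc S⁻¹ * (Z⁻¹ - 1) * S⁻¹ = S⁻¹ * Z⁻¹ * S⁻¹ - S⁻¹ * S⁻¹ := by noncomm_ring
    _ = X⁻¹ - Y⁻¹ := by rw [hZinv, e1, e2]
  rwa [final] at hc

lemma inv_sub_inv_psd_iff {X Y : Matrix (Fin n) (Fin n) ℂ} (hX : X.PosDef) (hY : Y.PosDef) :
    (X⁻¹ - Y⁻¹).PosSemidef ↔ (Y - X).PosSemidef := by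
  constructor
  · intro h
    have := inv_antitone hY.inv hX.inv h
    rwa [Matrix.nonsing_inv_nonsing_inv Y ((Matrix.isUnit_iff_isUnit_det Y).mp hY.isUnit),
      Matrix.nonsing_inv_nonsing_inv X ((Matrix.isUnit_iff_isUnit_det X).mp hX.isUnit)] at this
  · exact inv_antitone hX hY

lemma minv_one : ((1 : Matrix (Fin n) (Fin n) ℂ))⁻¹ = 1 :=
  Matrix.inv_eq_right_inv (one_mul 1)

lemma half_two : ((2:ℂ)⁻¹) • (2 : Matrix (Fin n) (Fin n) ℂ) = 1 := by
  have h : (2 : Matrix (Fin n) (Fin n) ℂ) = (2:ℂ) • 1 := by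
    rw [two_smul, one_add_one_eq_two]
  rw [h, smul_smul]
  norm_num

lemma tau_mono {T A B : Matrix (Fin n) (Fin n) ℂ} (hT : T.PosDef)
    (h1T2 : (1 - T ^ 2).PosSemidef) (hA : IsEffect A) (hB : IsEffect B) :
    (B - A).PosSemidef ↔ (tauMap T B - tauMap T A).PosSemidef := by
  have h1A : (1 + A).PosDef := Matrix.PosDef.one.add_posSemidef hA.1
  have h1B : (1 + B).PosDef := Matrix.PosDef.one.add_posSemidef hB.1
  have hMA : (1 - T ^ 2 + T * (1 + A)⁻¹ * T).PosDef :=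
    Matrix.PosDef.posSemidef_add h1T2 (posDef_conj hT h1A.inv)
  have hMB : (1 - T ^ 2 + T * (1 + B)⁻¹ * T).PosDef :=
    Matrix.PosDef.posSemidef_add h1T2 (posDef_conj hT h1B.inv)
  have e1 : (1 + B) - (1 + A) = B - A := by noncomm_ring
  have e2 : T * ((1 + A)⁻¹ - (1 + B)⁻¹) * T =
      (1 - T ^ 2 + T * (1 + A)⁻¹ * T) - (1 - T ^ 2 + T * (1 + B)⁻¹ * T) := by noncomm_ring
  have e3 : (1 - T ^ 2 + T * (1 + B)⁻¹ * T)⁻¹ - (1 - T ^ 2 + T * (1 + A)⁻¹ * T)⁻¹ =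
      tauMap T B - tauMap T A := by
    simp only [tauMap]; noncomm_ring
  calc (B - A).PosSemidef
      ↔ ((1 + A)⁻¹ - (1 + B)⁻¹).PosSemidef := by rw [inv_sub_inv_psd_iff h1A h1B, e1]
    _ ↔ (T * ((1 + A)⁻¹ - (1 + B)⁻¹) * T).PosSemidef := (conj_psd_iff hT).symm
    _ ↔ (tauMap T B - tauMap T A).PosSemidef := by
        rw [e2, ← e3, inv_sub_inv_psd_iff hMB hMA]

theorem tauMap_order_isomorphism {n : ℕ} {T : Matrix (Fin n) (Fin n) ℂ}
    (hT : T.PosDef) (hT1 : (1 - T).PosSemidef) :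
    tauMap T 0 = 0 ∧
    tauMap T 1 = T ^ 2 * (2 - T ^ 2)⁻¹ ∧
    (∀ A : Matrix (Fin n) (Fin n) ℂ, IsEffect A →
      (tauMap T A).PosSemidef ∧ (T ^ 2 * (2 - T ^ 2)⁻¹ - tauMap T A).PosSemidef) ∧
    (∀ C : Matrix (Fin n) (Fin n) ℂ, C.PosSemidef → (T ^ 2 * (2 - T ^ 2)⁻¹ - C).PosSemidef →
      ∃ A : Matrix (Fin n) (Fin n) ℂ, IsEffect A ∧ tauMap T A = C) ∧
    (∀ A B : Matrix (Fin n) (Fin n) ℂ, IsEffect A → IsEffect B →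
      ((B - A).PosSemidef ↔ (tauMap T B - tauMap T A).PosSemidef)) := by
  have hTd : IsUnit T.det := (Matrix.isUnit_iff_isUnit_det T).mp hT.isUnit
  have hT1i : T⁻¹ * T = 1 := Matrix.nonsing_inv_mul T hTd
  have hT2i : T * T⁻¹ = 1 := Matrix.mul_nonsing_inv T hTd
  have hTT : T⁻¹ * T ^ 2 * T⁻¹ = 1 := by
    calc T⁻¹ * T ^ 2 * T⁻¹ = (T⁻¹ * T) * (T * T⁻¹) := by rw [pow_two]; noncomm_ring
    _ = 1 := by rw [hT1i, hT2i, one_mul]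
  -- 1 - T² is psd
  have h1T2 : (1 - T ^ 2).PosSemidef := by
    obtain ⟨W, hWH, hWW⟩ : ∃ W : Matrix (Fin n) (Fin n) ℂ, W.IsHermitian ∧ W * W = T :=
      ⟨CFC.sqrt T, (CFC.sqrt_nonneg T).posSemidef.1, CFC.sqrt_mul_sqrt_self T hT.posSemidef.nonneg⟩
    have h := herm_conj_psd hWH hT1
    have e : W * (1 - T) * W = T - T ^ 2 := by
      rw [← hWW]; noncomm_ring
    rw [e] at h
    have e2 : 1 - T ^ 2 = (1 - T) + (T - T ^ 2) := by noncomm_ring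
    rw [e2]; exact hT1.add h
  have h2T2 : ((2 : Matrix (Fin n) (Fin n) ℂ) - T ^ 2).PosDef := by
    have h := Matrix.PosDef.one.add_posSemidef h1T2
    have e : (1 : Matrix (Fin n) (Fin n) ℂ) + (1 - T ^ 2) = 2 - T ^ 2 := by
      rw [show (2 : Matrix (Fin n) (Fin n) ℂ) = 1 + 1 from by norm_num]; abel
    rwa [e] at h
  have h2T2d : IsUnit ((2 : Matrix (Fin n) (Fin n) ℂ) - T ^ 2).det :=
    (Matrix.isUnit_iff_isUnit_det _).mp h2T2.isUnit
  have hcast : (((2:ℝ)⁻¹ : ℝ) : ℂ) = (2:ℂ)⁻¹ := by norm_num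
  have hhalf : ((2:ℂ)⁻¹) • ((2 : Matrix (Fin n) (Fin n) ℂ) - T ^ 2) =
      1 - (2:ℂ)⁻¹ • T ^ 2 := by
    rw [smul_sub, half_two]
  have hH : ((1 : Matrix (Fin n) (Fin n) ℂ) - (2:ℂ)⁻¹ • T ^ 2).PosDef := by
    rw [← hhalf, ← hcast]
    exact smul_posDef h2T2 (by norm_num)
  have hcomm : ((2 : Matrix (Fin n) (Fin n) ℂ) - T ^ 2) * T ^ 2 =
      T ^ 2 * (2 - T ^ 2) := by noncomm_ring
  have hHD1 : ((1 : Matrix (Fin n) (Fin n) ℂ) - (2:ℂ)⁻¹ • T ^ 2) *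
      (1 + T ^ 2 * (2 - T ^ 2)⁻¹) = 1 := by
    have hMD : ((1 : Matrix (Fin n) (Fin n) ℂ) - (2:ℂ)⁻¹ • T ^ 2) *
        (T ^ 2 * (2 - T ^ 2)⁻¹) = (2:ℂ)⁻¹ • T ^ 2 := by
      rw [← hhalf, smul_mul_assoc, ← mul_assoc, hcomm, mul_assoc,
        Matrix.mul_nonsing_inv _ h2T2d, mul_one]
    rw [mul_add, mul_one, hMD]
    abel
  have hHD2 : ((1 : Matrix (Fin n) (Fin n) ℂ) + T ^ 2 * (2 - T ^ 2)⁻¹) *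
      (1 - (2:ℂ)⁻¹ • T ^ 2) = 1 := by
    have hDM : (T ^ 2 * (2 - T ^ 2)⁻¹) * ((1 : Matrix (Fin n) (Fin n) ℂ) - (2:ℂ)⁻¹ • T ^ 2) =
        (2:ℂ)⁻¹ • T ^ 2 := by
      rw [← hhalf, mul_smul_comm, mul_assoc, Matrix.nonsing_inv_mul _ h2T2d, mul_one]
    rw [add_mul, one_mul, hDM]
    abel
  have hHinv : ((1 : Matrix (Fin n) (Fin n) ℂ) - (2:ℂ)⁻¹ • T ^ 2)⁻¹ =
      1 + T ^ 2 * (2 - T ^ 2)⁻¹ := Matrix.inv_eq_right_inv hHD1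
  have hDinv : ((1 : Matrix (Fin n) (Fin n) ℂ) + T ^ 2 * (2 - T ^ 2)⁻¹)⁻¹ =
      1 - (2:ℂ)⁻¹ • T ^ 2 := Matrix.inv_eq_right_inv hHD2
  have h1D : ((1 : Matrix (Fin n) (Fin n) ℂ) + T ^ 2 * (2 - T ^ 2)⁻¹).PosDef := by
    rw [← hHinv]; exact hH.inv
  -- part 1
  have part1 : tauMap T 0 = 0 := by
    have e : (1 : Matrix (Fin n) (Fin n) ℂ) - T ^ 2 + T * (1 + 0)⁻¹ * T = 1 := by
      rw [add_zero, minv_one, mul_one, ← pow_two]; abel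
    simp only [tauMap, e, minv_one, sub_self]
  -- part 2
  have part2 : tauMap T 1 = T ^ 2 * (2 - T ^ 2)⁻¹ := by
    have h2invmat : ((1 : Matrix (Fin n) (Fin n) ℂ) + 1)⁻¹ = (2:ℂ)⁻¹ • 1 := by
      rw [one_add_one_eq_two]
      exact Matrix.inv_eq_right_inv (by rw [mul_smul_comm, mul_one, half_two])
    have eM : (1 : Matrix (Fin n) (Fin n) ℂ) - T ^ 2 + T * ((2:ℂ)⁻¹ • 1) * T =
        1 - (2:ℂ)⁻¹ • T ^ 2 := by
      rw [mul_smul_comm, mul_one, smul_mul_assoc, ← pow_two]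
      module
    simp only [tauMap]
    rw [h2invmat, eM, hHinv]
    abel
  have eff0 : IsEffect (0 : Matrix (Fin n) (Fin n) ℂ) :=
    ⟨Matrix.PosSemidef.zero, by simpa using (Matrix.PosSemidef.one :
      (1 : Matrix (Fin n) (Fin n) ℂ).PosSemidef)⟩
  have eff1 : IsEffect (1 : Matrix (Fin n) (Fin n) ℂ) :=
    ⟨Matrix.PosSemidef.one, by simpa using (Matrix.PosSemidef.zero :
      (0 : Matrix (Fin n) (Fin n) ℂ).PosSemidef)⟩
  refine ⟨part1, part2, ?_, ?_, fun A B hA hB => tau_mono hT h1T2 hA hB⟩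
  · intro A hA
    constructor
    · have h := (tau_mono hT h1T2 eff0 hA).mp (by simpa using hA.1)
      rwa [part1, sub_zero] at h
    · have h := (tau_mono hT h1T2 hA eff1).mp hA.2
      rwa [part2] at h
  · intro C hC hDC
    have h1C : ((1 : Matrix (Fin n) (Fin n) ℂ) + C).PosDef :=
      Matrix.PosDef.one.add_posSemidef hC
    have h1Cd : IsUnit ((1 : Matrix (Fin n) (Fin n) ℂ) + C).det :=
      (Matrix.isUnit_iff_isUnit_det _).mp h1C.isUnit
    have hCinvH : (((1 : Matrix (Fin n) (Fin n) ℂ) + C)⁻¹ -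
        (1 - (2:ℂ)⁻¹ • T ^ 2)).PosSemidef := by
      have hdc : (((1 : Matrix (Fin n) (Fin n) ℂ) + T ^ 2 * (2 - T ^ 2)⁻¹) - (1 + C)).PosSemidef := by
        have e : ((1 : Matrix (Fin n) (Fin n) ℂ) + T ^ 2 * (2 - T ^ 2)⁻¹) - (1 + C) =
            T ^ 2 * (2 - T ^ 2)⁻¹ - C := by noncomm_ring
        rwa [e]
      have h := (inv_sub_inv_psd_iff h1C h1D).mpr hdc
      rwa [hDinv] at h
    have hT2pos : (T ^ 2).PosDef := by
      have h := posDef_conj hT Matrix.PosDef.one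
      rwa [mul_one, ← pow_two] at h
    have hhalfT2 : ((2:ℂ)⁻¹ • T ^ 2).PosDef := by
      rw [← hcast]; exact smul_posDef hT2pos (by norm_num)
    have hN : (((1 : Matrix (Fin n) (Fin n) ℂ) + C)⁻¹ - 1 + T ^ 2).PosDef := by
      have e : ((1 : Matrix (Fin n) (Fin n) ℂ) + C)⁻¹ - 1 + T ^ 2 =
          ((1 + C)⁻¹ - (1 - (2:ℂ)⁻¹ • T ^ 2)) + (2:ℂ)⁻¹ • T ^ 2 := by module
      rw [e]; exact Matrix.PosDef.posSemidef_add hCinvH hhalfT2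
    have hTinvH : (T⁻¹).IsHermitian := hT.1.inv
    have hP : (T⁻¹ * (((1 : Matrix (Fin n) (Fin n) ℂ) + C)⁻¹ - 1 + T ^ 2) * T⁻¹).PosDef :=
      posDef_conj hT.inv hN
    set P := T⁻¹ * (((1 : Matrix (Fin n) (Fin n) ℂ) + C)⁻¹ - 1 + T ^ 2) * T⁻¹ with hPdef
    have hPd : IsUnit P.det := (Matrix.isUnit_iff_isUnit_det P).mp hP.isUnit
    have hPexp : P = T⁻¹ * (1 + C)⁻¹ * T⁻¹ - T⁻¹ * T⁻¹ + 1 := by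
      have e : T⁻¹ * (((1 : Matrix (Fin n) (Fin n) ℂ) + C)⁻¹ - 1 + T ^ 2) * T⁻¹ =
          T⁻¹ * (1 + C)⁻¹ * T⁻¹ - T⁻¹ * T⁻¹ + T⁻¹ * T ^ 2 * T⁻¹ := by noncomm_ring
      rw [hPdef, e, hTT]
    refine ⟨P⁻¹ - 1, ⟨?_, ?_⟩, ?_⟩
    · -- P⁻¹ - 1 is psd
      have hc1 : ((1 : Matrix (Fin n) (Fin n) ℂ) - (1 + C)⁻¹).PosSemidef := by
        have hdc : (((1 : Matrix (Fin n) (Fin n) ℂ) + C) - 1).PosSemidef := by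
          have e : ((1 : Matrix (Fin n) (Fin n) ℂ) + C) - 1 = C := by noncomm_ring
          rwa [e]
        have h := (inv_sub_inv_psd_iff Matrix.PosDef.one h1C).mpr hdc
        rwa [minv_one] at h
      have e : (1 : Matrix (Fin n) (Fin n) ℂ) - P = T⁻¹ * (1 - (1 + C)⁻¹) * T⁻¹ := by
        have e2 : T⁻¹ * ((1 : Matrix (Fin n) (Fin n) ℂ) - (1 + C)⁻¹) * T⁻¹ =
            T⁻¹ * T⁻¹ - T⁻¹ * (1 + C)⁻¹ * T⁻¹ := by noncomm_ring
        rw [hPexp, e2]; abel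
      have h1P : ((1 : Matrix (Fin n) (Fin n) ℂ) - P).PosSemidef := by
        rw [e]; exact herm_conj_psd hTinvH hc1
      have h := (inv_sub_inv_psd_iff hP Matrix.PosDef.one).mpr h1P
      rwa [minv_one] at h
    · -- 1 - (P⁻¹ - 1) is psd
      have hhalfone : (((2:ℂ)⁻¹ • (1 : Matrix (Fin n) (Fin n) ℂ))).PosDef := by
        rw [← hcast]; exact smul_posDef Matrix.PosDef.one (by norm_num)
      have hP2 : (P - (2:ℂ)⁻¹ • (1 : Matrix (Fin n) (Fin n) ℂ)).PosSemidef := by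
        have r2 : T⁻¹ * (((1 : Matrix (Fin n) (Fin n) ℂ) + C)⁻¹ - (1 - (2:ℂ)⁻¹ • T ^ 2)) * T⁻¹ =
            T⁻¹ * (1 + C)⁻¹ * T⁻¹ - T⁻¹ * T⁻¹ + (2:ℂ)⁻¹ • (T⁻¹ * T ^ 2 * T⁻¹) := by
          rw [mul_sub, sub_mul, mul_sub, sub_mul, mul_one, mul_smul_comm, smul_mul_assoc]
          abel
        have e : P - (2:ℂ)⁻¹ • (1 : Matrix (Fin n) (Fin n) ℂ) =
            T⁻¹ * (((1 : Matrix (Fin n) (Fin n) ℂ) + C)⁻¹ - (1 - (2:ℂ)⁻¹ • T ^ 2)) * T⁻¹ := by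
          rw [r2, hTT, hPexp]
          module
        rw [e]; exact herm_conj_psd hTinvH hCinvH
      have h := (inv_sub_inv_psd_iff hhalfone hP).mpr hP2
      have hinvhalf : (((2:ℂ)⁻¹ • (1 : Matrix (Fin n) (Fin n) ℂ)))⁻¹ =
          (2 : Matrix (Fin n) (Fin n) ℂ) := by
        refine Matrix.inv_eq_right_inv ?_
        rw [smul_mul_assoc, one_mul, half_two]
      rw [hinvhalf] at h
      have e : (1 : Matrix (Fin n) (Fin n) ℂ) - (P⁻¹ - 1) = 2 - P⁻¹ := by
        rw [show (2 : Matrix (Fin n) (Fin n) ℂ) = 1 + 1 from by norm_num]; abel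
      rwa [e]
    · -- tauMap T (P⁻¹ - 1) = C
      have h1A : (1 : Matrix (Fin n) (Fin n) ℂ) + (P⁻¹ - 1) = P⁻¹ := by abel
      have hPinv : P⁻¹⁻¹ = P := Matrix.nonsing_inv_nonsing_inv P hPd
      have hTPT : T * P * T = ((1 : Matrix (Fin n) (Fin n) ℂ) + C)⁻¹ - 1 + T ^ 2 := by
        have e : T * (T⁻¹ * (((1 : Matrix (Fin n) (Fin n) ℂ) + C)⁻¹ - 1 + T ^ 2) * T⁻¹) * T =
            (T * T⁻¹) * (((1 : Matrix (Fin n) (Fin n) ℂ) + C)⁻¹ - 1 + T ^ 2) * (T⁻¹ * T) := by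
          noncomm_ring
        rw [hPdef, e, hT2i, hT1i, one_mul, mul_one]
      have eM : (1 : Matrix (Fin n) (Fin n) ℂ) - T ^ 2 + T * P * T = (1 + C)⁻¹ := by
        rw [hTPT]; abel
      simp only [tauMap]
      rw [h1A, hPinv, eM, Matrix.nonsing_inv_nonsing_inv _ h1Cd]
      abel
end

section
/- For a bijective map φ on the set of all self-adjoint bounded operators satisfying φ(A) ≤ φ(B) ⟺ A ≤ B, and operators A, B, the pair (A, B) satisfies the betweenness-comparability condition (†) if and only if (φ(A), φ(B)) does; consequently φ preserves adjacency in both directions. -/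
open Matrix ComplexOrder

/-- Loewner order: `A ≤ B` iff `B - A` is positive semidefinite. -/
def Loewner {n : ℕ} (A B : Matrix (Fin n) (Fin n) ℂ) : Prop := (B - A).PosSemidef

/-- Condition (†) for a pair `(A, B)`: `A ≠ B`, `A` and `B` are comparable, and any two
Hermitian matrices between `A` and `B` are comparable. -/
def DaggerCond {n : ℕ} (A B : Matrix (Fin n) (Fin n) ℂ) : Prop :=
  A ≠ B ∧ (Loewner A B ∨ Loewner B A) ∧
  ∀ C D : Matrix (Fin n) (Fin n) ℂ, C.IsHermitian → D.IsHermitian →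
    (Loewner A C ∧ Loewner C B ∨ Loewner B C ∧ Loewner C A) →
    (Loewner A D ∧ Loewner D B ∨ Loewner B D ∧ Loewner D A) →
    (Loewner C D ∨ Loewner D C)

section Helpers

variable {n : ℕ}

private lemma mulVec_outer (v x : Fin n → ℂ) :
    vecMulVec v (star v) *ᵥ x = (star v ⬝ᵥ x) • v := by
  ext i
  simp only [vecMulVec_apply, mulVec, dotProduct, Pi.star_apply, Pi.smul_apply, smul_eq_mul,
    Finset.sum_mul, Finset.mul_sum]
  exact Finset.sum_congr rfl fun j _ => by ring

private lemma outer_herm (v : Fin n → ℂ) : (vecMulVec v (star v)).IsHermitian := by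
  ext i j
  simp [vecMulVec_apply, conjTranspose_apply, mul_comm]

private lemma outer_psd (v : Fin n → ℂ) : (vecMulVec v (star v)).PosSemidef := by
  refine .of_dotProduct_mulVec_nonneg (outer_herm v) fun x => ?_
  rw [mulVec_outer, dotProduct_smul]
  have h : star x ⬝ᵥ v = star (star v ⬝ᵥ x) := by rw [star_dotProduct]
  rw [smul_eq_mul, h]
  exact mul_star_self_nonneg _

private lemma psd_smul {M : Matrix (Fin n) (Fin n) ℂ} (hM : M.PosSemidef) {c : ℝ} (hc : 0 ≤ c) :
    ((c : ℂ) • M).PosSemidef := by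
  refine .of_dotProduct_mulVec_nonneg ?_ fun x => ?_
  · unfold Matrix.IsHermitian
    rw [conjTranspose_smul, hM.1]
    norm_num
  · rw [smul_mulVec, dotProduct_smul, smul_eq_mul]
    exact mul_nonneg (by exact_mod_cast hc) (hM.dotProduct_mulVec_nonneg x)

private lemma mulVec_ext {M N : Matrix (Fin n) (Fin n) ℂ} (h : ∀ x, M *ᵥ x = N *ᵥ x) : M = N := by
  ext i j
  have := congrFun (h (Pi.single j 1)) i
  simpa [mulVec_single] using this

private lemma psd_neg_zero {M : Matrix (Fin n) (Fin n) ℂ} (h1 : M.PosSemidef)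
    (h2 : (-M).PosSemidef) : M = 0 := by
  apply mulVec_ext
  intro x
  rw [zero_mulVec]
  rw [← h1.dotProduct_mulVec_zero_iff]
  have := h2.dotProduct_mulVec_nonneg x
  rw [neg_mulVec, dotProduct_neg] at this
  exact le_antisymm (neg_nonneg.mp this) (h1.dotProduct_mulVec_nonneg x)

private lemma posSemidef_sum {ι : Type*} (s : Finset ι) (f : ι → Matrix (Fin n) (Fin n) ℂ)
    (h : ∀ i ∈ s, (f i).PosSemidef) : (∑ i ∈ s, f i).PosSemidef := by
  classical
  induction s using Finset.induction_on with
  | empty => simpa using Matrix.PosSemidef.zero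
  | insert _ _ hns ih =>
    rw [Finset.sum_insert hns]
    exact (h _ (Finset.mem_insert_self _ _)).add
      (ih fun i hi => h i (Finset.mem_insert_of_mem hi))

private lemma rank_neg (M : Matrix (Fin n) (Fin n) ℂ) : (-M).rank = M.rank := by
  have h : (-1 : Matrix (Fin n) (Fin n) ℂ) * M = -M := neg_one_mul M
  rw [← h]
  exact Matrix.rank_mul_eq_right_of_isUnit_det _ _
    ((Matrix.isUnit_iff_isUnit_det _).mp isUnit_one.neg)

private lemma between_outer {v : Fin n → ℂ} {M : Matrix (Fin n) (Fin n) ℂ} (hM : M.IsHermitian)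
    (h1 : (vecMulVec v (star v) - M).PosSemidef)
    (h2 : (M + vecMulVec v (star v)).PosSemidef) :
    ∃ α : ℝ, M = (α : ℂ) • vecMulVec v (star v) := by
  set V := vecMulVec v (star v) with hV
  have key : ∀ x : Fin n → ℂ, star v ⬝ᵥ x = 0 → M *ᵥ x = 0 := by
    intro x hx
    have hVx : V *ᵥ x = 0 := by rw [hV, mulVec_outer, hx, zero_smul]
    have e2 : star x ⬝ᵥ (M + V) *ᵥ x = star x ⬝ᵥ M *ᵥ x := by
      rw [add_mulVec, hVx, add_zero]
    have e1 : star x ⬝ᵥ (V - M) *ᵥ x = -(star x ⬝ᵥ M *ᵥ x) := by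
      rw [sub_mulVec, hVx, zero_sub, dotProduct_neg]
    have q1 := h1.dotProduct_mulVec_nonneg x
    have q2 := h2.dotProduct_mulVec_nonneg x
    rw [e1] at q1
    rw [e2] at q2
    have hz : star x ⬝ᵥ M *ᵥ x = 0 := le_antisymm (neg_nonneg.mp q1) q2
    have := (h2.dotProduct_mulVec_zero_iff x).mp (by rw [e2, hz])
    rw [add_mulVec, hVx, add_zero] at this
    exact this
  by_cases hv : v = 0
  · refine ⟨0, ?_⟩
    have : M = 0 := mulVec_ext fun x => by
      rw [key x (by simp [hv]), zero_mulVec]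
    rw [this, Complex.ofReal_zero, zero_smul]
  · have hnv : star v ⬝ᵥ v ≠ 0 := fun h => hv ((dotProduct_star_self_eq_zero).mp h)
    set nv := star v ⬝ᵥ v with hnvdef
    have horth : ∀ x : Fin n → ℂ, star v ⬝ᵥ x = 0 → star x ⬝ᵥ (M *ᵥ v) = 0 := by
      intro x hx
      have : star x ⬝ᵥ M *ᵥ v = star (M *ᵥ x) ⬝ᵥ v := by
        rw [dotProduct_mulVec, star_mulVec, hM.eq]
      rw [this, key x hx]
      simp
    set c : ℂ := (star v ⬝ᵥ (M *ᵥ v)) / nv with hc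
    have hMv : M *ᵥ v = c • v := by
      set x := M *ᵥ v - c • v with hx
      have hvx : star v ⬝ᵥ x = 0 := by
        rw [hx, dotProduct_sub, dotProduct_smul, smul_eq_mul, hc, div_mul_cancel₀ _ hnv, sub_self]
      have h0 : star x ⬝ᵥ (M *ᵥ v) = 0 := horth x hvx
      have hxv : star x ⬝ᵥ v = 0 := by
        rw [star_dotProduct, hvx, star_zero]
      have : star x ⬝ᵥ x = 0 := by
        have e : (star x ⬝ᵥ x) = star x ⬝ᵥ (M *ᵥ v) - c * (star x ⬝ᵥ v) := by
          nth_rewrite 2 [hx]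
          rw [dotProduct_sub, dotProduct_smul, smul_eq_mul]
        rw [e, h0, hxv, mul_zero, sub_zero]
      have := (dotProduct_star_self_eq_zero).mp this
      rw [hx] at this
      rw [sub_eq_zero] at this
      exact this
    have hMeq : M = (c / nv) • V := by
      apply mulVec_ext
      intro w
      set t : ℂ := (star v ⬝ᵥ w) / nv with ht
      have hw : w = t • v + (w - t • v) := by ring_nf
      have horthw : star v ⬝ᵥ (w - t • v) = 0 := by
        rw [dotProduct_sub, dotProduct_smul, smul_eq_mul, ht, div_mul_cancel₀ _ hnv, sub_self]
      calc M *ᵥ w = M *ᵥ (t • v + (w - t • v)) := by rw [← hw]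
        _ = t • (M *ᵥ v) + M *ᵥ (w - t • v) := by rw [mulVec_add, mulVec_smul]
        _ = (t * c) • v := by rw [key _ horthw, hMv, add_zero, smul_smul]
        _ = ((c / nv) • V) *ᵥ w := by
            rw [smul_mulVec, hV, mulVec_outer, smul_smul]
            congr 1
            rw [ht]
            field_simp
    have hre : ∃ α : ℝ, c / nv = (α : ℝ) := by
      obtain ⟨i, hi⟩ := Function.ne_iff.mp hv
      have hVii : V i i ≠ 0 := by
        rw [hV]
        simp only [vecMulVec_apply, Pi.star_apply]
        exact mul_ne_zero hi (star_ne_zero.mpr hi)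
      have hconj : star (c / nv) = c / nv := by
        have h1 := hM.eq
        rw [hMeq] at h1
        have h2 : (star (c / nv)) • V = (c / nv) • V := by
          have hVh : Vᴴ = V := by
            ext a b
            simp [hV, vecMulVec_apply, conjTranspose_apply, mul_comm]
          calc (star (c / nv)) • V = (star (c/nv)) • Vᴴ := by rw [hVh]
            _ = ((c/nv) • V)ᴴ := by rw [conjTranspose_smul]
            _ = (c / nv) • V := h1
        have := congrFun (congrFun (congrArg (fun (X : Matrix (Fin n) (Fin n) ℂ) => X) h2) i) i
        simp only [Matrix.smul_apply, smul_eq_mul] at this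
        exact mul_right_cancel₀ hVii this
      exact ⟨(c / nv).re, (Complex.conj_eq_iff_re.mp hconj).symm⟩
    obtain ⟨α, hα⟩ := hre
    exact ⟨α, by rw [hMeq, hα]⟩

private noncomputable def evCol {T : Matrix (Fin n) (Fin n) ℂ} (hT : T.IsHermitian) (i : Fin n) :
    Fin n → ℂ :=
  fun k => (Matrix.IsHermitian.eigenvectorUnitary hT : Matrix (Fin n) (Fin n) ℂ) k i

private lemma spectral_sum {T : Matrix (Fin n) (Fin n) ℂ} (hT : T.IsHermitian) :
    T = ∑ i : Fin n, ((hT.eigenvalues i : ℝ) : ℂ) • vecMulVec (evCol hT i) (star (evCol hT i)) := by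
  conv_lhs => rw [hT.spectral_theorem]
  ext j k
  rw [Unitary.conjStarAlgAut_apply, Matrix.mul_apply]
  simp only [Matrix.sum_apply, Matrix.smul_apply, vecMulVec_apply, Pi.star_apply, evCol,
    smul_eq_mul, Matrix.mul_diagonal, Matrix.star_apply,
    Function.comp_apply]
  refine Finset.sum_congr rfl fun a _ => ?_
  rw [mul_assoc]
  exact mul_left_comm _ _ _

private lemma evCol_ortho {T : Matrix (Fin n) (Fin n) ℂ} (hT : T.IsHermitian) (i j : Fin n) :
    star (evCol hT i) ⬝ᵥ evCol hT j = if i = j then 1 else 0 := by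
  have h := Unitary.coe_star_mul_self (Matrix.IsHermitian.eigenvectorUnitary hT)
  have := congrFun (congrFun (congrArg (fun M : Matrix (Fin n) (Fin n) ℂ => M) h) i) j
  simp only [Matrix.mul_apply, Matrix.one_apply] at this
  rw [← this]
  simp [dotProduct, evCol, Matrix.star_apply]

private lemma dagger_comm {A B : Matrix (Fin n) (Fin n) ℂ} (h : DaggerCond A B) :
    DaggerCond B A := by
  obtain ⟨hne, hcomp, hbet⟩ := h
  exact ⟨hne.symm, hcomp.symm, fun C D hC hD h1 h2 => hbet C D hC hD h1.symm h2.symm⟩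

private lemma dagger_of_outer {A B : Matrix (Fin n) (Fin n) ℂ} (hA : A.IsHermitian)
    (hne : B - A ≠ 0) (w : Fin n → ℂ) (hw : B - A = vecMulVec w (star w)) : DaggerCond A B := by
  have hW := outer_psd w
  have key : ∀ C : Matrix (Fin n) (Fin n) ℂ, C.IsHermitian →
      (Loewner A C ∧ Loewner C B ∨ Loewner B C ∧ Loewner C A) →
      ∃ α : ℝ, C - A = (α : ℂ) • vecMulVec w (star w) := by
    intro C hC hbetC
    rcases hbetC with ⟨h1, h2⟩ | ⟨h1, h2⟩
    · -- A ≤ C ≤ B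
      refine between_outer (hC.sub hA) ?_ ?_
      · have : vecMulVec w (star w) - (C - A) = B - C := by rw [← hw]; abel
        rw [this]; exact h2
      · exact h1.add hW
    · -- B ≤ C ≤ A : impossible since it forces B - A = 0
      exfalso
      have hsum : (C - B) + (A - C) = -(B - A) := by abel
      have hpsd : (-(B - A)).PosSemidef := hsum ▸ Matrix.PosSemidef.add h1 h2
      exact hne (psd_neg_zero (show (B - A).PosSemidef by rw [hw]; exact hW) hpsd)
  refine ⟨fun h => hne (by rw [h, sub_self]), Or.inl (show (B - A).PosSemidef by rw [hw]; exact hW), ?_⟩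
  intro C D hC hD h1 h2
  obtain ⟨α, hα⟩ := key C hC h1
  obtain ⟨β, hβ⟩ := key D hD h2
  have hDC : D - C = ((β - α : ℝ) : ℂ) • vecMulVec w (star w) := by
    have : D - C = (D - A) - (C - A) := by abel
    rw [this, hα, hβ, ← sub_smul]
    norm_num
  have hCD : C - D = ((α - β : ℝ) : ℂ) • vecMulVec w (star w) := by
    have : C - D = (C - A) - (D - A) := by abel
    rw [this, hα, hβ, ← sub_smul]
    norm_num
  rcases le_total α β with hle | hle
  · exact Or.inl (show (D - C).PosSemidef by rw [hDC]; exact psd_smul hW (by linarith))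
  · exact Or.inr (show (C - D).PosSemidef by rw [hCD]; exact psd_smul hW (by linarith))

private lemma rank_one_of_psd_dagger {A B : Matrix (Fin n) (Fin n) ℂ} (hA : A.IsHermitian)
    (hB : B.IsHermitian) (hpsd : (B - A).PosSemidef) (hne : A ≠ B)
    (hbet : ∀ C D : Matrix (Fin n) (Fin n) ℂ, C.IsHermitian → D.IsHermitian →
      (Loewner A C ∧ Loewner C B ∨ Loewner B C ∧ Loewner C A) →
      (Loewner A D ∧ Loewner D B ∨ Loewner B D ∧ Loewner D A) →
      (Loewner C D ∨ Loewner D C)) :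
    (B - A).rank = 1 := by
  classical
  set T := B - A with hT
  have hTh : T.IsHermitian := hpsd.1
  have hT0 : T ≠ 0 := sub_ne_zero.mpr (Ne.symm hne)
  rw [hTh.rank_eq_card_non_zero_eigs]
  -- there is at least one nonzero eigenvalue
  have hex : ∃ i, hTh.eigenvalues i ≠ 0 := by
    by_contra h
    push_neg at h
    apply hT0
    rw [spectral_sum hTh]
    refine Finset.sum_eq_zero fun i _ => by rw [h i, Complex.ofReal_zero, zero_smul]
  -- any two nonzero eigenvalues have the same index
  have huniq : ∀ i j, hTh.eigenvalues i ≠ 0 → hTh.eigenvalues j ≠ 0 → i = j := by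
    intro i j hi hj
    by_contra hij
    have hipos : 0 < hTh.eigenvalues i := lt_of_le_of_ne (hpsd.eigenvalues_nonneg i) (Ne.symm hi)
    have hjpos : 0 < hTh.eigenvalues j := lt_of_le_of_ne (hpsd.eigenvalues_nonneg j) (Ne.symm hj)
    set P : Fin n → Matrix (Fin n) (Fin n) ℂ :=
      fun k => ((hTh.eigenvalues k : ℝ) : ℂ) • vecMulVec (evCol hTh k) (star (evCol hTh k))
      with hP
    have hPpsd : ∀ k, (P k).PosSemidef := fun k =>
      psd_smul (outer_psd _) (hpsd.eigenvalues_nonneg k)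
    have hTsum : T = ∑ k : Fin n, P k := spectral_sum hTh
    have hrest : ∀ k : Fin n, (T - P k).PosSemidef := by
      intro k
      have : T - P k = ∑ l ∈ Finset.univ.erase k, P l := by
        rw [hTsum, ← Finset.add_sum_erase _ _ (Finset.mem_univ k)]
        abel
      rw [this]
      exact posSemidef_sum _ _ fun l _ => hPpsd l
    -- the two intermediate points
    have hbetween : ∀ k : Fin n,
        Loewner A (A + P k) ∧ Loewner (A + P k) B := by
      intro k
      constructor
      · show (A + P k - A).PosSemidef
        have : A + P k - A = P k := by abel
        rw [this]; exact hPpsd k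
      · show (B - (A + P k)).PosSemidef
        have : B - (A + P k) = T - P k := by rw [hT]; abel
        rw [this]; exact hrest k
    have hCh : ∀ k, (A + P k).IsHermitian := fun k => hA.add (hPpsd k).1
    have hcomp := hbet (A + P i) (A + P j) (hCh i) (hCh j)
      (Or.inl (hbetween i)) (Or.inl (hbetween j))
    -- evaluate to get a contradiction
    have heval : ∀ k l m : Fin n, k ≠ l →
        star (evCol hTh k) ⬝ᵥ (P l - P k) *ᵥ evCol hTh k = ((-(hTh.eigenvalues k) : ℝ) : ℂ) := by
      intro k l m hkl
      rw [sub_mulVec, dotProduct_sub, hP]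
      simp only [smul_mulVec, dotProduct_smul, mulVec_outer, smul_smul]
      rw [evCol_ortho, evCol_ortho, evCol_ortho]
      simp [if_neg (show ¬ l = k from fun h => hkl h.symm)]
    rcases hcomp with h | h
    · -- Loewner (A + P i) (A + P j) : (P j - P i) psd, evaluate at evCol i
      have hq : ((A + P j) - (A + P i)) = P j - P i := by abel
      have := h.dotProduct_mulVec_nonneg (evCol hTh i)
      rw [hq] at this
      rw [heval i j i hij] at this
      have : (0:ℝ) ≤ -(hTh.eigenvalues i) := by exact_mod_cast this
      linarith
    · have hq : ((A + P i) - (A + P j)) = P i - P j := by abel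
      have := h.dotProduct_mulVec_nonneg (evCol hTh j)
      rw [hq] at this
      rw [heval j i j (Ne.symm hij)] at this
      have : (0:ℝ) ≤ -(hTh.eigenvalues j) := by exact_mod_cast this
      linarith
  obtain ⟨i0, hi0⟩ := hex
  rw [Fintype.card_eq_one_iff]
  exact ⟨⟨i0, hi0⟩, fun ⟨j, hj⟩ => Subtype.ext (huniq j i0 hj hi0)⟩

private lemma rank_one_of_dagger {A B : Matrix (Fin n) (Fin n) ℂ} (hA : A.IsHermitian)
    (hB : B.IsHermitian) (hd : DaggerCond A B) : (B - A).rank = 1 := by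
  obtain ⟨hne, hcomp, hbet⟩ := hd
  rcases hcomp with h | h
  · exact rank_one_of_psd_dagger hA hB h hne hbet
  · have := rank_one_of_psd_dagger hB hA h hne.symm
      (fun C D hC hD h1 h2 => hbet C D hC hD h1.symm h2.symm)
    rw [← rank_neg, neg_sub] at this
    exact this

private lemma dagger_of_rank_one {A B : Matrix (Fin n) (Fin n) ℂ} (hA : A.IsHermitian)
    (hB : B.IsHermitian) (h : (B - A).rank = 1) : DaggerCond A B := by
  classical
  set T := B - A with hT
  have hTh : T.IsHermitian := hB.sub hA
  have hT0 : T ≠ 0 := by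
    intro h0
    rw [h0, Matrix.rank_zero] at h
    exact one_ne_zero h.symm
  -- exactly one nonzero eigenvalue
  have hcard : Fintype.card {i // hTh.eigenvalues i ≠ 0} = 1 := by
    rw [← hTh.rank_eq_card_non_zero_eigs]; exact h
  obtain ⟨⟨i0, hi0⟩, huniq⟩ := Fintype.card_eq_one_iff.mp hcard
  have hzero : ∀ k, k ≠ i0 → hTh.eigenvalues k = 0 := by
    intro k hk
    by_contra hk0
    exact hk (congrArg Subtype.val (huniq ⟨k, hk0⟩))
  have hTeq : T = ((hTh.eigenvalues i0 : ℝ) : ℂ) •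
      vecMulVec (evCol hTh i0) (star (evCol hTh i0)) := by
    refine (spectral_sum hTh).trans ?_
    exact Finset.sum_eq_single i0
      (fun k _ hk => by rw [hzero k hk, Complex.ofReal_zero, zero_smul])
      (fun hm => absurd (Finset.mem_univ i0) hm)
  set lam := hTh.eigenvalues i0 with hlam
  obtain ⟨u, hu⟩ : ∃ u : Fin n → ℂ, T = ((lam : ℝ) : ℂ) • vecMulVec u (star u) :=
    ⟨evCol hTh i0, hTeq⟩
  have houter : ∀ (c : ℝ), 0 < c → ∀ u : Fin n → ℂ,
      ((c : ℂ) • vecMulVec u (star u)) =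
        vecMulVec ((Real.sqrt c : ℂ) • u) (star ((Real.sqrt c : ℂ) • u)) := by
    intro c hc u
    ext a b
    simp only [Matrix.smul_apply, vecMulVec_apply, Pi.star_apply, Pi.smul_apply, smul_eq_mul,
      star_mul', Complex.star_def, Complex.conj_ofReal]
    have : (Real.sqrt c : ℂ) * (Real.sqrt c : ℂ) = (c : ℂ) := by
      rw [← Complex.ofReal_mul, Real.mul_self_sqrt hc.le]
    ring_nf
    rw [show ((Real.sqrt c : ℝ) : ℂ) ^ 2 = (c : ℂ) from by
      rw [← Complex.ofReal_pow, Real.sq_sqrt hc.le]]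
    ring
  rcases lt_or_gt_of_ne (show (0:ℝ) ≠ lam from fun h0 => hi0 h0.symm) with hpos | hneg
  · refine dagger_of_outer hA ?_ _ ((show B - A = ((lam : ℝ) : ℂ) • vecMulVec u (star u) from by
      rw [← hT]; exact hu).trans (houter lam hpos _))
    rw [← hT]; exact hT0
  · -- lam < 0 : A - B is a positive outer product, get DaggerCond B A first
    have hBA : A - B = ((-lam : ℝ) : ℂ) • vecMulVec u (star u) := by
      have e : A - B = -T := by rw [hT]; abel
      rw [e, hu]
      push_cast
      rw [neg_smul]
    have hne' : A - B ≠ 0 := by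
      intro h0
      apply hT0
      rw [hT, ← neg_sub A B, h0, neg_zero]
    apply dagger_comm
    exact dagger_of_outer hB hne' _ (hBA.trans (houter (-lam) (by linarith) _))

end Helpers

theorem order_preserver_preserves_adjacency {n : ℕ} (hn : 2 ≤ n)
    (φ : {A : Matrix (Fin n) (Fin n) ℂ // A.IsHermitian} →
         {A : Matrix (Fin n) (Fin n) ℂ // A.IsHermitian})
    (hbij : Function.Bijective φ)
    (hord : ∀ A B, Loewner A.1 B.1 ↔ Loewner (φ A).1 (φ B).1) :
    (∀ A B, DaggerCond A.1 B.1 ↔ DaggerCond (φ A).1 (φ B).1) ∧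
    (∀ A B : {A : Matrix (Fin n) (Fin n) ℂ // A.IsHermitian},
      (B.1 - A.1).rank = 1 ↔ ((φ B).1 - (φ A).1).rank = 1) := by
  have part1 : ∀ A B, DaggerCond A.1 B.1 ↔ DaggerCond (φ A).1 (φ B).1 := by
    intro A B
    constructor
    · rintro ⟨hne, hcomp, hbet⟩
      refine ⟨?_, hcomp.imp (hord A B).1 (hord B A).1, ?_⟩
      · intro h
        exact hne (congrArg Subtype.val (hbij.1 (Subtype.ext h)))
      · intro C D hC hD h1 h2
        obtain ⟨C', hC'⟩ := hbij.2 ⟨C, hC⟩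
        obtain ⟨D', hD'⟩ := hbij.2 ⟨D, hD⟩
        have eC : (φ C').1 = C := by rw [hC']
        have eD : (φ D').1 = D := by rw [hD']
        rw [← eC] at h1 ⊢
        rw [← eD] at h2 ⊢
        have h1' : Loewner A.1 C'.1 ∧ Loewner C'.1 B.1 ∨ Loewner B.1 C'.1 ∧ Loewner C'.1 A.1 :=
          h1.imp (fun h => ⟨(hord A C').2 h.1, (hord C' B).2 h.2⟩)
            (fun h => ⟨(hord B C').2 h.1, (hord C' A).2 h.2⟩)
        have h2' : Loewner A.1 D'.1 ∧ Loewner D'.1 B.1 ∨ Loewner B.1 D'.1 ∧ Loewner D'.1 A.1 :=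
          h2.imp (fun h => ⟨(hord A D').2 h.1, (hord D' B).2 h.2⟩)
            (fun h => ⟨(hord B D').2 h.1, (hord D' A).2 h.2⟩)
        exact (hbet C'.1 D'.1 C'.2 D'.2 h1' h2').imp (hord C' D').1 (hord D' C').1
    · rintro ⟨hne, hcomp, hbet⟩
      refine ⟨?_, hcomp.imp (hord A B).2 (hord B A).2, ?_⟩
      · intro h
        exact hne (by rw [show A = B from Subtype.ext h])
      · intro C D hC hD h1 h2
        set C' : {A : Matrix (Fin n) (Fin n) ℂ // A.IsHermitian} := ⟨C, hC⟩
        set D' : {A : Matrix (Fin n) (Fin n) ℂ // A.IsHermitian} := ⟨D, hD⟩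
        have h1' : Loewner (φ A).1 (φ C').1 ∧ Loewner (φ C').1 (φ B).1 ∨
            Loewner (φ B).1 (φ C').1 ∧ Loewner (φ C').1 (φ A).1 :=
          h1.imp (fun h => ⟨(hord A C').1 h.1, (hord C' B).1 h.2⟩)
            (fun h => ⟨(hord B C').1 h.1, (hord C' A).1 h.2⟩)
        have h2' : Loewner (φ A).1 (φ D').1 ∧ Loewner (φ D').1 (φ B).1 ∨
            Loewner (φ B).1 (φ D').1 ∧ Loewner (φ D').1 (φ A).1 :=
          h2.imp (fun h => ⟨(hord A D').1 h.1, (hord D' B).1 h.2⟩)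
            (fun h => ⟨(hord B D').1 h.1, (hord D' A).1 h.2⟩)
        exact (hbet (φ C').1 (φ D').1 (φ C').2 (φ D').2 h1' h2').imp
          (hord C' D').2 (hord D' C').2
  refine ⟨part1, fun A B => ?_⟩
  constructor
  · intro h
    exact rank_one_of_dagger (φ A).2 (φ B).2
      ((part1 A B).1 (dagger_of_rank_one A.2 B.2 h))
  · intro h
    exact rank_one_of_dagger A.2 B.2
      ((part1 A B).2 (dagger_of_rank_one (φ A).2 (φ B).2 h))
end

section
/- Let P, Q, R be rank-one projections onto the spans of nonzero vectors x, y, z respectively. Then span(x) ⊆ span(y) + span(z) if and only if every rank-one projection orthogonal to both Q and R is orthogonal to P. -/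
open Matrix ComplexOrder

/-- `P` is the rank-one projection onto the span of `x`. -/
def IsProjOnto {n : ℕ} (P : Matrix (Fin n) (Fin n) ℂ) (x : Fin n → ℂ) : Prop :=
  P.IsHermitian ∧ P * P = P ∧ LinearMap.range P.mulVecLin = Submodule.span ℂ {x}

private lemma matrix_ext_mulVec {n : ℕ} {A B : Matrix (Fin n) (Fin n) ℂ}
    (h : ∀ v, A.mulVec v = B.mulVec v) : A = B := by
  ext i j
  have := congrFun (h (Pi.single j 1)) i
  simpa [Matrix.mulVec_single] using this

private lemma mul_eq_zero_of_mulVec {n : ℕ} {A B : Matrix (Fin n) (Fin n) ℂ}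
    (h : ∀ v, A.mulVec (B.mulVec v) = 0) : A * B = 0 := by
  apply matrix_ext_mulVec
  intro v
  rw [← Matrix.mulVec_mulVec]
  simp [h v]

set_option maxHeartbeats 1600000 in
theorem span_le_sup_iff_orthogonality {n : ℕ} (hn : 3 ≤ n) {x y z : Fin n → ℂ}
    (hx : x ≠ 0) (hy : y ≠ 0) (hz : z ≠ 0)
    {P Q R : Matrix (Fin n) (Fin n) ℂ}
    (hP : IsProjOnto P x) (hQ : IsProjOnto Q y) (hR : IsProjOnto R z) :
    Submodule.span ℂ {x} ≤ Submodule.span ℂ {y} ⊔ Submodule.span ℂ {z} ↔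
      ∀ S : Matrix (Fin n) (Fin n) ℂ, S.IsHermitian → S * S = S → S.rank = 1 →
        S * Q = 0 → S * R = 0 → S * P = 0 := by
  constructor
  · intro h S _ _ _ hSQ hSR
    -- S kills y and z
    have hy0 : S.mulVec y = 0 := by
      have : y ∈ LinearMap.range Q.mulVecLin := by
        rw [hQ.2.2]; exact Submodule.mem_span_singleton_self y
      obtain ⟨u, hu⟩ := this
      have : S.mulVec (Q.mulVec u) = (S * Q).mulVec u := Matrix.mulVec_mulVec u S Q
      rw [Matrix.mulVecLin_apply] at hu
      rw [← hu, this, hSQ, Matrix.zero_mulVec]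
    have hz0 : S.mulVec z = 0 := by
      have : z ∈ LinearMap.range R.mulVecLin := by
        rw [hR.2.2]; exact Submodule.mem_span_singleton_self z
      obtain ⟨u, hu⟩ := this
      have : S.mulVec (R.mulVec u) = (S * R).mulVec u := Matrix.mulVec_mulVec u S R
      rw [Matrix.mulVecLin_apply] at hu
      rw [← hu, this, hSR, Matrix.zero_mulVec]
    have hker : Submodule.span ℂ {y} ⊔ Submodule.span ℂ {z} ≤ LinearMap.ker S.mulVecLin := by
      rw [← Submodule.span_union, Submodule.span_le]
      rintro v (rfl | rfl) <;> simp [LinearMap.mem_ker, Matrix.mulVecLin_apply, hy0, hz0]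
    apply mul_eq_zero_of_mulVec
    intro v
    have hmem : P.mulVec v ∈ Submodule.span ℂ {x} := by
      rw [← hP.2.2]; exact ⟨v, rfl⟩
    have := hker (h hmem)
    simpa [LinearMap.mem_ker, Matrix.mulVecLin_apply] using this
  · intro hall
    rw [Submodule.span_le, Set.singleton_subset_iff]
    by_contra hxK
    -- work in Euclidean space
    set K : Submodule ℂ (Fin n → ℂ) := Submodule.span ℂ {y, z} with hK
    set K' : Submodule ℂ (EuclideanSpace ℂ (Fin n)) :=
      K.comap (WithLp.linearEquiv 2 ℂ (Fin n → ℂ)).toLinearMap with hK'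
    obtain ⟨u', hu, w', hw, hxuw'⟩ := K'.exists_add_mem_mem_orthogonal (WithLp.toLp 2 x)
    obtain ⟨u, rfl⟩ : ∃ u, WithLp.toLp 2 u = u' := ⟨u'.ofLp, rfl⟩
    obtain ⟨w, rfl⟩ : ∃ w, WithLp.toLp 2 w = w' := ⟨w'.ofLp, rfl⟩
    replace hu : u ∈ K := hu
    have hxuw : x = u + w := by simpa using congrArg WithLp.ofLp hxuw'
    have hsup : Submodule.span ℂ {y} ⊔ Submodule.span ℂ {z} =
        Submodule.span ℂ ({y, z} : Set (Fin n → ℂ)) := by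
      rw [← Submodule.span_union]; rfl
    have hxK' : x ∉ K := by
      intro hmem
      exact hxK (by rw [SetLike.mem_coe, hsup]; exact hmem)
    have hw0 : w ≠ 0 := by
      rintro rfl
      rw [add_zero] at hxuw
      exact hxK' (hxuw ▸ hu)
    set c : ℂ := star w ⬝ᵥ w with hcdef
    have hc : c ≠ 0 := fun h0 => hw0 (dotProduct_star_self_eq_zero.mp h0)
    set S : Matrix (Fin n) (Fin n) ℂ := c⁻¹ • vecMulVec w (star w) with hS
    have key : ∀ v : Fin n → ℂ, S.mulVec v = (c⁻¹ * (star w ⬝ᵥ v)) • w := by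
      intro v
      rw [hS, Matrix.smul_mulVec]
      funext i
      simp only [Pi.smul_apply, smul_eq_mul, Matrix.mulVec, dotProduct, vecMulVec_apply,
        Pi.star_apply]
      rw [show ∑ j, w i * star (w j) * v j = w i * ∑ j, star (w j) * v j by
        rw [Finset.mul_sum]; exact Finset.sum_congr rfl fun j _ => by ring]
      simp only [PiLp.smul_apply, Pi.smul_apply, smul_eq_mul]
      ring
    have horth : ∀ a : Fin n → ℂ, a ∈ K → star w ⬝ᵥ a = 0 := by
      intro a ha
      have := (Submodule.mem_orthogonal' K' _).mp hw (WithLp.toLp 2 a) ha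
      simpa [PiLp.inner_apply, RCLike.inner_apply, dotProduct, mul_comm] using this
    have hcstar : star c = c := by
      simp [hcdef, dotProduct, mul_comm]
    have hherm : S.IsHermitian := by
      ext i j
      simp only [hS, Matrix.conjTranspose_apply, Matrix.smul_apply, vecMulVec_apply,
        smul_eq_mul, star_mul', star_star, star_inv₀, hcstar, Pi.star_apply]
      ring
    have hSw : S.mulVec w = w := by
      rw [key, ← hcdef, inv_mul_cancel₀ hc, one_smul]
    have hidem : S * S = S := by
      apply matrix_ext_mulVec
      intro v
      rw [← Matrix.mulVec_mulVec, key v, Matrix.mulVec_smul, hSw]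
    have hrange : LinearMap.range S.mulVecLin = Submodule.span ℂ {w} := by
      apply le_antisymm
      · rintro _ ⟨v, rfl⟩
        rw [Matrix.mulVecLin_apply, key]
        exact Submodule.smul_mem _ _ (Submodule.mem_span_singleton_self w)
      · rw [Submodule.span_le, Set.singleton_subset_iff]
        exact ⟨w, by rw [Matrix.mulVecLin_apply, hSw]⟩
    have hrank : S.rank = 1 := by
      rw [Matrix.rank, hrange]
      exact finrank_span_singleton hw0
    have hkill : ∀ a : Fin n → ℂ, a ∈ K → S.mulVec a = 0 := by
      intro a ha
      rw [key, horth a ha, mul_zero, zero_smul]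
    have hSQ : S * Q = 0 := by
      apply mul_eq_zero_of_mulVec
      intro v
      apply hkill
      have h1 : Q.mulVec v ∈ Submodule.span ℂ ({y} : Set (Fin n → ℂ)) := by
        rw [← hQ.2.2]; exact ⟨v, rfl⟩
      have h2 : Q.mulVec v ∈ Submodule.span ℂ ({y, z} : Set (Fin n → ℂ)) :=
        Submodule.span_mono (Set.singleton_subset_iff.mpr (Set.mem_insert y {z})) h1
      exact h2
    have hSR : S * R = 0 := by
      apply mul_eq_zero_of_mulVec
      intro v
      apply hkill
      have h1 : R.mulVec v ∈ Submodule.span ℂ ({z} : Set (Fin n → ℂ)) := by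
        rw [← hR.2.2]; exact ⟨v, rfl⟩
      have h2 : R.mulVec v ∈ Submodule.span ℂ ({y, z} : Set (Fin n → ℂ)) :=
        Submodule.span_mono
          (Set.singleton_subset_iff.mpr (Set.mem_insert_of_mem y (Set.mem_singleton z))) h1
      exact h2
    have hSP := hall S hherm hidem hrank hSQ hSR
    have hxr : x ∈ LinearMap.range P.mulVecLin := by
      rw [hP.2.2]; exact Submodule.mem_span_singleton_self x
    obtain ⟨v, hv⟩ := hxr
    rw [Matrix.mulVecLin_apply] at hv
    have : S.mulVec x = 0 := by
      rw [← hv, Matrix.mulVec_mulVec, hSP, Matrix.zero_mulVec]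
    rw [show (x : Fin n → ℂ) = u + w from hxuw, Matrix.mulVec_add, hkill u hu, hSw,
      zero_add] at this
    exact hw0 this
end

section
/- An effect A has rank one if and only if A ≠ 0 and any two effects B, C with B ≤ A and C ≤ A are comparable. -/
open Matrix ComplexOrder

namespace EffectAux

variable {n : ℕ}

lemma vmv_mulVec (v w x : Fin n → ℂ) : vecMulVec v w *ᵥ x = (w ⬝ᵥ x) • v := by
  ext j
  simp [mulVec, vecMulVec_apply, dotProduct, Finset.mul_sum, Finset.sum_mul, mul_comm,
    mul_left_comm]

lemma star_dot_conj (u x : Fin n → ℂ) : star x ⬝ᵥ u = starRingEnd ℂ (star u ⬝ᵥ x) := by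
  simp [dotProduct, mul_comm]

lemma vmv_herm (u : Fin n → ℂ) : (vecMulVec u (star u)).IsHermitian := by
  ext i j
  simp [conjTranspose_apply, vecMulVec_apply, mul_comm]

lemma smul_vmv_herm (c : ℝ) (u : Fin n → ℂ) : ((c : ℂ) • vecMulVec u (star u)).IsHermitian := by
  unfold Matrix.IsHermitian
  rw [conjTranspose_smul, (vmv_herm u)]
  norm_num

/-- a Hermitian matrix acting as `x ↦ (r ⟨u,x⟩) • u` with `r ≥ 0` is psd -/
lemma psd_of_structure (M : Matrix (Fin n) (Fin n) ℂ) (hM : M.IsHermitian) (u : Fin n → ℂ)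
    (r : ℝ) (hr : 0 ≤ r) (h : ∀ x, M *ᵥ x = ((r : ℂ) * (star u ⬝ᵥ x)) • u) :
    M.PosSemidef := by
  refine posSemidef_iff_dotProduct_mulVec.mpr ⟨hM, fun x => ?_⟩
  rw [h x, dotProduct_smul, smul_eq_mul]
  set z := star u ⬝ᵥ x with hz
  rw [star_dot_conj u x, ← hz]
  have : (r : ℂ) * z * ((starRingEnd ℂ) z) = ((r * Complex.normSq z : ℝ) : ℂ) := by
    rw [mul_assoc, Complex.mul_conj]; push_cast; ring
  rw [this]
  exact_mod_cast Complex.zero_le_real.mpr (mul_nonneg hr (Complex.normSq_nonneg z))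

/-- expansion of `M *ᵥ x` over an orthonormal basis -/
lemma mulVec_expand (M : Matrix (Fin n) (Fin n) ℂ)
    (b : OrthonormalBasis (Fin n) ℂ (EuclideanSpace ℂ (Fin n))) (x : Fin n → ℂ) :
    M *ᵥ x = ∑ k, (star (b k : Fin n → ℂ) ⬝ᵥ x) • (M *ᵥ (b k : Fin n → ℂ)) := by
  have hx : x = ∑ k, (star (b k : Fin n → ℂ) ⬝ᵥ x) • (b k : Fin n → ℂ) :=
    by
    have h := congrArg WithLp.ofLp (b.sum_repr' (WithLp.toLp 2 x))
    simp only [WithLp.ofLp_sum, WithLp.ofLp_smul, EuclideanSpace.inner_eq_star_dotProduct,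
      WithLp.ofLp_toLp] at h
    conv_lhs => rw [← h]
    exact Finset.sum_congr rfl fun k _ => by rw [dotProduct_comm]
  have h0 : M *ᵥ x = M.mulVecLin x := rfl
  rw [h0]
  conv_lhs => rw [hx]
  rw [map_sum]
  simp only [_root_.map_smul, mulVecLin_apply]

/-- subtracting `c·uu*` from a psd matrix with eigenvector `u`, eigenvalue `c`, unit `u` -/
lemma sub_eigen_psd {M : Matrix (Fin n) (Fin n) ℂ} (hM : M.PosSemidef) {u : Fin n → ℂ}
    {c : ℝ} (hu : star u ⬝ᵥ u = 1) (heig : M *ᵥ u = (c : ℂ) • u) :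
    (M - (c : ℂ) • vecMulVec u (star u)).PosSemidef := by
  refine posSemidef_iff_dotProduct_mulVec.mpr ⟨hM.1.sub (smul_vmv_herm c u), fun x => ?_⟩
  set z := star u ⬝ᵥ x with hz
  have hherm : star u ⬝ᵥ (M *ᵥ x) = (c : ℂ) * z := by
    rw [dotProduct_mulVec]
    have h1 : star u ᵥ* M = star (M *ᵥ u) := by
      rw [← hM.1.eq, ← star_mulVec, hM.1.eq]
    rw [h1, heig]
    have : star ((c : ℂ) • u) = (c : ℂ) • star u := by ext k; simp
    rw [this, smul_dotProduct, smul_eq_mul, ← hz]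
  have key : star x ⬝ᵥ ((M - (c : ℂ) • vecMulVec u (star u)) *ᵥ x)
      = star (x - z • u) ⬝ᵥ (M *ᵥ (x - z • u)) := by
    have hstar : star (x - z • u) = star x - starRingEnd ℂ z • star u := by
      ext k; simp [mul_comm]
    rw [hstar, mulVec_sub, mulVec_smul, heig, sub_mulVec, smul_mulVec, vmv_mulVec, ← hz]
    simp only [dotProduct_sub, sub_dotProduct, dotProduct_smul, smul_dotProduct, smul_eq_mul,
      smul_smul, hherm, hu, star_dot_conj u x, ← hz]
    ring
  rw [key]
  exact hM.dotProduct_mulVec_nonneg _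

/-- a Hermitian `M` with `0 ≤ M ≤ A` where the eigenvectors `b k`, `k ≠ i₀` of `A` kill `M`,
acts as a multiple of the projection onto `b i₀`. -/
lemma mulVec_structure {M : Matrix (Fin n) (Fin n) ℂ} (hM : M.IsHermitian)
    (b : OrthonormalBasis (Fin n) ℂ (EuclideanSpace ℂ (Fin n))) (i₀ : Fin n)
    (hker : ∀ k, k ≠ i₀ → M *ᵥ (b k : Fin n → ℂ) = 0) (x : Fin n → ℂ) :
    M *ᵥ x = ((star (b i₀ : Fin n → ℂ) ⬝ᵥ (M *ᵥ (b i₀ : Fin n → ℂ)))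
      * (star (b i₀ : Fin n → ℂ) ⬝ᵥ x)) • (b i₀ : Fin n → ℂ) := by
  set u : Fin n → ℂ := (b i₀ : Fin n → ℂ) with hudef
  -- step 1 : M *ᵥ u is a multiple of u
  have hcoef : ∀ k, k ≠ i₀ → star (b k : Fin n → ℂ) ⬝ᵥ (M *ᵥ u) = 0 := by
    intro k hk
    rw [dotProduct_mulVec]
    have h1 : star (b k : Fin n → ℂ) ᵥ* M = star (M *ᵥ (b k : Fin n → ℂ)) := by
      rw [← hM.eq, ← star_mulVec, hM.eq]
    rw [h1, hker k hk]
    simp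
  have hw : M *ᵥ u = ∑ k, (star (b k : Fin n → ℂ) ⬝ᵥ (M *ᵥ u)) • (b k : Fin n → ℂ) :=
    by
    have h := congrArg WithLp.ofLp (b.sum_repr' (WithLp.toLp 2 (M *ᵥ u)))
    simp only [WithLp.ofLp_sum, WithLp.ofLp_smul, EuclideanSpace.inner_eq_star_dotProduct,
      WithLp.ofLp_toLp] at h
    conv_lhs => rw [← h]
    exact Finset.sum_congr rfl fun k _ => by rw [dotProduct_comm]
  have hu1 : M *ᵥ u = (star u ⬝ᵥ (M *ᵥ u)) • u := by
    conv_lhs => rw [hw]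
    rw [Finset.sum_eq_single_of_mem i₀ (Finset.mem_univ i₀)]
    intro k _ hk
    rw [hcoef k hk, zero_smul]
  -- step 2 : expand x
  rw [mulVec_expand M b x, Finset.sum_eq_single_of_mem i₀ (Finset.mem_univ i₀)]
  · rw [← hudef, mul_comm, ← smul_smul, ← hu1]
  · intro k _ hk
    rw [hker k hk, smul_zero]

end EffectAux

open EffectAux in
theorem effect_rank_one_iff {n : ℕ} (hn : 2 ≤ n) {A : Matrix (Fin n) (Fin n) ℂ}
    (hA : IsEffect A) :
    A.rank = 1 ↔
      A ≠ 0 ∧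
      ∀ B C : Matrix (Fin n) (Fin n) ℂ, IsEffect B → IsEffect C →
        (A - B).PosSemidef → (A - C).PosSemidef →
        ((C - B).PosSemidef ∨ (B - C).PosSemidef) := by
  obtain ⟨hA1, hA2⟩ := hA
  have hH : A.IsHermitian := hA1.1
  have horth : ∀ k l, star (hH.eigenvectorBasis k : Fin n → ℂ) ⬝ᵥ
      (hH.eigenvectorBasis l : Fin n → ℂ) = if k = l then 1 else 0 :=
    fun k l => by
      rw [← orthonormal_iff_ite.mp hH.eigenvectorBasis.orthonormal k l,
        EuclideanSpace.inner_eq_star_dotProduct, dotProduct_comm]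
  have hmu0 : ∀ k, 0 ≤ hH.eigenvalues k := fun k => hA1.eigenvalues_nonneg k
  have heig : ∀ k, A *ᵥ (hH.eigenvectorBasis k : Fin n → ℂ)
      = ((hH.eigenvalues k : ℂ)) • (hH.eigenvectorBasis k : Fin n → ℂ) := by
    intro k
    have h0 := congrFun (hH.mulVec_eigenvectorBasis k)
    ext j
    have := h0 j
    simpa [Complex.real_smul] using this
  have hrank := hH.rank_eq_card_non_zero_eigs
  haveI : Nonempty (Fin n) := ⟨⟨0, by omega⟩⟩
  constructor
  · -- forward direction
    intro h1
    constructor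
    · intro h0
      rw [h0, Matrix.rank_zero] at h1
      exact one_ne_zero h1.symm
    · intro B C hB hC hAB hAC
      rw [h1] at hrank
      obtain ⟨⟨i₀, hi₀⟩, huniq⟩ := Fintype.card_eq_one_iff.mp hrank.symm
      have hzero : ∀ k, k ≠ i₀ → hH.eigenvalues k = 0 := by
        intro k hk
        by_contra h
        exact hk (congrArg Subtype.val (huniq ⟨k, h⟩))
      set u : Fin n → ℂ := (hH.eigenvectorBasis i₀ : Fin n → ℂ) with hudef
      -- matrices below A are killed by the other eigenvectors
      have hkill : ∀ M : Matrix (Fin n) (Fin n) ℂ, M.PosSemidef → (A - M).PosSemidef →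
          ∀ k, k ≠ i₀ → M *ᵥ (hH.eigenvectorBasis k : Fin n → ℂ) = 0 := by
        intro M hM hAM k hk
        set w : Fin n → ℂ := (hH.eigenvectorBasis k : Fin n → ℂ)
        have hAw : A *ᵥ w = 0 := by
          rw [heig k, hzero k hk]
          simp
        have h1 : star w ⬝ᵥ ((A - M) *ᵥ w) = -(star w ⬝ᵥ (M *ᵥ w)) := by
          rw [sub_mulVec, dotProduct_sub, hAw, dotProduct_zero, zero_sub]
        have h2 := hAM.dotProduct_mulVec_nonneg w
        rw [h1] at h2
        have h3 : star w ⬝ᵥ (M *ᵥ w) = 0 :=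
          le_antisymm (by simpa using neg_nonneg.mp (by simpa using h2)) (hM.dotProduct_mulVec_nonneg w)
        exact (hM.dotProduct_mulVec_zero_iff w).mp h3
      -- coefficients
      set β : ℂ := star u ⬝ᵥ (B *ᵥ u) with hβ
      set γ : ℂ := star u ⬝ᵥ (C *ᵥ u) with hγ
      have hβ0 : 0 ≤ β := hB.1.dotProduct_mulVec_nonneg u
      have hγ0 : 0 ≤ γ := hC.1.dotProduct_mulVec_nonneg u
      have hβre : β = ((β.re : ℝ) : ℂ) := by
        have := (Complex.le_def.mp hβ0).2
        apply Complex.ext <;> simp [← this]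
      have hγre : γ = ((γ.re : ℝ) : ℂ) := by
        have := (Complex.le_def.mp hγ0).2
        apply Complex.ext <;> simp [← this]
      have hBx := mulVec_structure hB.1.1 hH.eigenvectorBasis i₀
        (hkill B hB.1 hAB) 
      have hCx := mulVec_structure hC.1.1 hH.eigenvectorBasis i₀
        (hkill C hC.1 hAC)
      rcases le_total β.re γ.re with hle | hle
      · left
        refine psd_of_structure _ (hC.1.1.sub hB.1.1) u (γ.re - β.re) (by linarith) ?_
        intro x
        rw [sub_mulVec, hBx x, hCx x, ← hudef, ← hβ, ← hγ, ← sub_smul, ← sub_mul]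
        congr 2
        rw [hβre, hγre]
        simp
      · right
        refine psd_of_structure _ (hB.1.1.sub hC.1.1) u (β.re - γ.re) (by linarith) ?_
        intro x
        rw [sub_mulVec, hBx x, hCx x, ← hudef, ← hβ, ← hγ, ← sub_smul, ← sub_mul]
        congr 2
        rw [hβre, hγre]
        simp
  · -- backward direction
    rintro ⟨hA0, hcomp⟩
    by_contra hne
    -- the rank is at least 2
    have hcard0 : Fintype.card {i // hH.eigenvalues i ≠ 0} ≠ 0 := by
      intro h
      apply hA0
      have hzero : ∀ k, hH.eigenvalues k = 0 := by
        intro k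
        by_contra h'
        exact (Fintype.card_eq_zero_iff.mp h).elim ⟨k, h'⟩
      have : (RCLike.ofReal ∘ hH.eigenvalues : Fin n → ℂ) = 0 := by
        funext k; simp [hzero k]
      have hs := hH.spectral_theorem
      have hd : diagonal (0 : Fin n → ℂ) = 0 := diagonal_zero
      rw [this, hd, map_zero] at hs
      exact hs
    have hcard2 : 1 < Fintype.card {i // hH.eigenvalues i ≠ 0} := by
      rw [hrank] at hne
      omega
    obtain ⟨⟨i, hi⟩, ⟨j, hj⟩, hij'⟩ := Fintype.exists_pair_of_one_lt_card hcard2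
    have hij : i ≠ j := fun h => hij' (Subtype.ext h)
    have hμi : 0 < hH.eigenvalues i := lt_of_le_of_ne (hmu0 i) (Ne.symm hi)
    have hμj : 0 < hH.eigenvalues j := lt_of_le_of_ne (hmu0 j) (Ne.symm hj)
    set ui : Fin n → ℂ := (hH.eigenvectorBasis i : Fin n → ℂ) with hui
    set uj : Fin n → ℂ := (hH.eigenvectorBasis j : Fin n → ℂ) with huj
    have huii : star ui ⬝ᵥ ui = 1 := by rw [hui, horth i i, if_pos rfl]
    have hujj : star uj ⬝ᵥ uj = 1 := by rw [huj, horth j j, if_pos rfl]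
    have huij : star ui ⬝ᵥ uj = 0 := by rw [hui, huj, horth i j, if_neg hij]
    have huji : star uj ⬝ᵥ ui = 0 := by rw [hui, huj, horth j i, if_neg (Ne.symm hij)]
    set B : Matrix (Fin n) (Fin n) ℂ := (hH.eigenvalues i : ℂ) • vecMulVec ui (star ui) with hBdef
    set C : Matrix (Fin n) (Fin n) ℂ := (hH.eigenvalues j : ℂ) • vecMulVec uj (star uj) with hCdef
    have hBact : ∀ x, B *ᵥ x = ((hH.eigenvalues i : ℂ) * (star ui ⬝ᵥ x)) • ui := by
      intro x
      rw [hBdef, smul_mulVec, vmv_mulVec, smul_smul]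
    have hCact : ∀ x, C *ᵥ x = ((hH.eigenvalues j : ℂ) * (star uj ⬝ᵥ x)) • uj := by
      intro x
      rw [hCdef, smul_mulVec, vmv_mulVec, smul_smul]
    have hBpsd : B.PosSemidef :=
      psd_of_structure _ (smul_vmv_herm _ _) ui _ (le_of_lt hμi) hBact
    have hCpsd : C.PosSemidef :=
      psd_of_structure _ (smul_vmv_herm _ _) uj _ (le_of_lt hμj) hCact
    have hAB : (A - B).PosSemidef := sub_eigen_psd hA1 huii (heig i)
    have hAC : (A - C).PosSemidef := sub_eigen_psd hA1 hujj (heig j)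
    have hBeff : IsEffect B := by
      refine ⟨hBpsd, ?_⟩
      rw [← sub_add_sub_cancel (1 : Matrix (Fin n) (Fin n) ℂ) A B]
      exact hA2.add hAB
    have hCeff : IsEffect C := by
      refine ⟨hCpsd, ?_⟩
      rw [← sub_add_sub_cancel (1 : Matrix (Fin n) (Fin n) ℂ) A C]
      exact hA2.add hAC
    have hval : ∀ (M : Matrix (Fin n) (Fin n) ℂ), M.PosSemidef →
        ∀ x, 0 ≤ (star x ⬝ᵥ (M *ᵥ x)).re := by
      intro M hM x
      exact (Complex.le_def.mp (hM.dotProduct_mulVec_nonneg x)).1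
    rcases hcomp B C hBeff hCeff hAB hAC with h | h
    · have hv := hval _ h ui
      rw [sub_mulVec, dotProduct_sub, hBact ui, hCact ui, huii, huji] at hv
      simp [huii] at hv
      linarith
    · have hv := hval _ h uj
      rw [sub_mulVec, dotProduct_sub, hBact uj, hCact uj, hujj, huij] at hv
      simp [hujj] at hv
      linarith
end

section
/- Two effects A and B are equal if and only if for every rank-one projection P, sup{t ∈ [0,1] : tP ≤ A} = sup{t ∈ [0,1] : tP ≤ B}. -/
open Matrix ComplexOrder

theorem herm_dot_real {N : ℕ} {A : Matrix (Fin N) (Fin N) ℂ} (h : A.IsHermitian)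
    (y : Fin N → ℂ) : star y ⬝ᵥ (A *ᵥ y) = ((star y ⬝ᵥ (A *ᵥ y)).re : ℂ) := by
  have key : star (A *ᵥ y) ⬝ᵥ y = star y ⬝ᵥ (A *ᵥ y) := by
    rw [star_mulVec, h.eq, dotProduct_mulVec]
  have h1 : (starRingEnd ℂ) (star y ⬝ᵥ (A *ᵥ y)) = star y ⬝ᵥ (A *ᵥ y) := by
    show star (star y ⬝ᵥ (A *ᵥ y)) = _
    conv_lhs => rw [star_dotProduct y (A *ᵥ y), star_star]
    exact key
  exact ((Complex.conj_eq_iff_re).mp h1).symm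

theorem herm_swap {N : ℕ} {A : Matrix (Fin N) (Fin N) ℂ} (h : A.IsHermitian)
    (z y : Fin N → ℂ) : star (A *ᵥ z) ⬝ᵥ y = star z ⬝ᵥ (A *ᵥ y) := by
  rw [star_mulVec, h.eq, dotProduct_mulVec]

section Pfacts
variable {N : ℕ} (x : Fin N → ℂ)

theorem P_mulVec (y : Fin N → ℂ) :
    (vecMulVec x (star x)) *ᵥ y = (star x ⬝ᵥ y) • x := by
  funext i
  simp only [mulVec, vecMulVec, dotProduct, Pi.smul_apply, smul_eq_mul, of_apply,
    Pi.star_apply, Finset.sum_mul, Finset.mul_sum]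
  apply Finset.sum_congr rfl
  intro j _
  ring

theorem P_herm : (vecMulVec x (star x)).IsHermitian := by
  ext i j
  simp [conjTranspose_apply, vecMulVec, mul_comm]

theorem P_idem (hx : star x ⬝ᵥ x = 1) :
    (vecMulVec x (star x)) * (vecMulVec x (star x)) = vecMulVec x (star x) := by
  ext i j
  simp only [mul_apply, vecMulVec, of_apply, Pi.star_apply]
  calc ∑ k, x i * star (x k) * (x k * star (x j))
      = (x i * star (x j)) * ∑ k, star (x k) * x k := by
        rw [Finset.mul_sum]; exact Finset.sum_congr rfl fun k _ => by ring
    _ = x i * star (x j) := by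
        have : (star x ⬝ᵥ x) = ∑ k, star (x k) * x k := rfl
        rw [← this, hx, mul_one]

theorem P_rank (hx : star x ⬝ᵥ x = 1) : (vecMulVec x (star x)).rank = 1 := by
  have hxne : x ≠ 0 := by
    intro h
    rw [h] at hx
    simp [dotProduct] at hx
  have hrange : LinearMap.range (vecMulVec x (star x)).mulVecLin = Submodule.span ℂ {x} := by
    apply le_antisymm
    · rintro v ⟨y, rfl⟩
      rw [mulVecLin_apply, P_mulVec]
      exact Submodule.smul_mem _ _ (Submodule.mem_span_singleton_self x)
    · rw [Submodule.span_singleton_le_iff_mem]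
      refine ⟨x, ?_⟩
      rw [mulVecLin_apply, P_mulVec, hx, one_smul]
  rw [Matrix.rank, hrange]
  exact finrank_span_singleton hxne

end Pfacts

noncomputable section Mset
variable {N : ℕ}

def qf (A : Matrix (Fin N) (Fin N) ℂ) (y : Fin N → ℂ) : ℝ := (star y ⬝ᵥ (A *ᵥ y)).re

def mset (A : Matrix (Fin N) (Fin N) ℂ) (x : Fin N → ℂ) : Set ℝ :=
  {r | ∃ y, star x ⬝ᵥ y = 1 ∧ r = qf A y}

theorem qf_smul (A : Matrix (Fin N) (Fin N) ℂ) (c : ℂ) (y : Fin N → ℂ) :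
    qf A (c • y) = Complex.normSq c * qf A y := by
  unfold qf
  rw [mulVec_smul, star_smul, smul_dotProduct, dotProduct_smul]
  simp only [smul_eq_mul, ← mul_assoc]
  rw [show (star c : ℂ) = (starRingEnd ℂ) c from rfl, mul_comm ((starRingEnd ℂ) c) c,
    Complex.mul_conj]
  simp [Complex.ofReal_mul]

theorem mset_nonempty (A : Matrix (Fin N) (Fin N) ℂ) {x : Fin N → ℂ}
    (hx : star x ⬝ᵥ x = 1) : (mset A x).Nonempty := ⟨qf A x, x, hx, rfl⟩

theorem mset_bddBelow {A : Matrix (Fin N) (Fin N) ℂ} (hA : A.PosSemidef) (x : Fin N → ℂ) :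
    BddBelow (mset A x) := by
  refine ⟨0, fun r hr => ?_⟩
  obtain ⟨y, -, rfl⟩ := hr
  exact hA.re_dotProduct_nonneg y

theorem msInf_nonneg {A : Matrix (Fin N) (Fin N) ℂ} (hA : A.PosSemidef) {x : Fin N → ℂ}
    (hx : star x ⬝ᵥ x = 1) : 0 ≤ sInf (mset A x) := by
  refine le_csInf (mset_nonempty A hx) ?_
  rintro r ⟨y, -, rfl⟩
  exact hA.re_dotProduct_nonneg y

theorem key_easy {A : Matrix (Fin N) (Fin N) ℂ} (hA : A.PosSemidef) {x : Fin N → ℂ}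
    (hx : star x ⬝ᵥ x = 1) (y : Fin N → ℂ) :
    sInf (mset A x) * Complex.normSq (star x ⬝ᵥ y) ≤ qf A y := by
  set c := star x ⬝ᵥ y with hc
  by_cases h0 : c = 0
  · rw [h0]
    rw [Complex.normSq_zero, mul_zero]; exact hA.re_dotProduct_nonneg y
  · have hmem : qf A (c⁻¹ • y) ∈ mset A x := by
      refine ⟨c⁻¹ • y, ?_, rfl⟩
      rw [dotProduct_smul, ← hc, smul_eq_mul, inv_mul_cancel₀ h0]
    have h1 : sInf (mset A x) ≤ qf A (c⁻¹ • y) := csInf_le (mset_bddBelow hA x) hmem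
    rw [qf_smul, Complex.normSq_inv] at h1
    have hn : 0 < Complex.normSq c := Complex.normSq_pos.mpr h0
    rw [← le_div_iff₀ hn]
    rwa [div_eq_inv_mul]

end Mset

noncomputable section SupEq
variable {N : ℕ} {A : Matrix (Fin N) (Fin N) ℂ} {x : Fin N → ℂ}

theorem dot_sub_smulP (t : ℝ) (y : Fin N → ℂ) :
    star y ⬝ᵥ ((A - (t : ℂ) • vecMulVec x (star x)) *ᵥ y)
      = star y ⬝ᵥ (A *ᵥ y) - ((t * Complex.normSq (star x ⬝ᵥ y) : ℝ) : ℂ) := by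
  rw [sub_mulVec, dotProduct_sub, smul_mulVec, P_mulVec, dotProduct_smul,
    dotProduct_smul]
  congr 1
  have h1 : star y ⬝ᵥ x = star (star x ⬝ᵥ y) := star_dotProduct y x
  rw [h1]
  simp only [smul_eq_mul]
  rw [show (star (star x ⬝ᵥ y) : ℂ) = (starRingEnd ℂ) (star x ⬝ᵥ y) from rfl,
    Complex.mul_conj]
  push_cast
  ring

theorem qf_le_one (hA : IsEffect A) (hx : star x ⬝ᵥ x = 1) : qf A x ≤ 1 := by
  have h := hA.2.re_dotProduct_nonneg x
  rw [sub_mulVec, one_mulVec, dotProduct_sub] at h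
  rw [RCLike.re_to_complex, Complex.sub_re, hx] at h
  simp only [Complex.one_re] at h
  unfold qf
  linarith

theorem msInf_le_one (hA : IsEffect A) (hx : star x ⬝ᵥ x = 1) :
    sInf (mset A x) ≤ 1 :=
  le_trans (csInf_le (mset_bddBelow hA.1 x) ⟨x, hx, rfl⟩) (qf_le_one hA hx)

theorem set_eq (hA : IsEffect A) (hx : star x ⬝ᵥ x = 1) :
    {t : ℝ | t ∈ Set.Icc (0 : ℝ) 1 ∧ (A - (t : ℂ) • vecMulVec x (star x)).PosSemidef}
      = Set.Icc 0 (sInf (mset A x)) := by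
  ext t
  simp only [Set.mem_setOf_eq, Set.mem_Icc]
  constructor
  · rintro ⟨⟨ht0, _⟩, hpsd⟩
    refine ⟨ht0, le_csInf (mset_nonempty A hx) ?_⟩
    rintro r ⟨y, hy, rfl⟩
    have h := hpsd.re_dotProduct_nonneg y
    rw [dot_sub_smulP] at h
    rw [RCLike.re_to_complex, Complex.sub_re, Complex.ofReal_re, hy] at h
    simp only [_root_.map_one, mul_one] at h
    unfold qf
    linarith
  · rintro ⟨ht0, htm⟩
    have ht1 : t ≤ 1 := le_trans htm (msInf_le_one hA hx)
    refine ⟨⟨ht0, ht1⟩, posSemidef_iff_dotProduct_mulVec.mpr ⟨?_, ?_⟩⟩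
    · have hP := P_herm x
      have : ((t : ℂ) • vecMulVec x (star x)).IsHermitian := by
        unfold Matrix.IsHermitian
        rw [conjTranspose_smul, hP.eq]
        congr 1
        simp
      exact hA.1.1.sub this
    · intro y
      rw [dot_sub_smulP, herm_dot_real hA.1.1]
      rw [show (((star y ⬝ᵥ A *ᵥ y).re : ℂ) - ((t * Complex.normSq (star x ⬝ᵥ y) : ℝ) : ℂ))
          = (((star y ⬝ᵥ A *ᵥ y).re - t * Complex.normSq (star x ⬝ᵥ y) : ℝ) : ℂ) by push_cast; ring]
      rw [Complex.zero_le_real]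
      have hkey := key_easy hA.1 hx y
      have : t * Complex.normSq (star x ⬝ᵥ y) ≤ sInf (mset A x) * Complex.normSq (star x ⬝ᵥ y) :=
        mul_le_mul_of_nonneg_right htm (Complex.normSq_nonneg _)
      unfold qf at hkey
      linarith

theorem sup_eq_msInf (hA : IsEffect A) (hx : star x ⬝ᵥ x = 1) :
    sSup {t : ℝ | t ∈ Set.Icc (0 : ℝ) 1 ∧ (A - (t : ℂ) • vecMulVec x (star x)).PosSemidef}
      = sInf (mset A x) := by
  rw [set_eq hA hx]
  exact csSup_Icc (msInf_nonneg hA.1 hx)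

end SupEq

noncomputable section CS
variable {N : ℕ} {A : Matrix (Fin N) (Fin N) ℂ}

theorem cauchy_schwarz (hA : A.PosSemidef) {z : Fin N → ℂ} (hz : 0 < qf A z)
    (y : Fin N → ℂ) :
    Complex.normSq (star z ⬝ᵥ (A *ᵥ y)) ≤ qf A z * qf A y := by
  set s : ℂ := star z ⬝ᵥ (A *ᵥ y) with hs
  set qz : ℝ := qf A z with hqz
  have hqzne : (qz : ℂ) ≠ 0 := by
    simp only [ne_eq, Complex.ofReal_eq_zero]
    exact ne_of_gt hz
  have hAz : star z ⬝ᵥ (A *ᵥ z) = (qz : ℂ) := herm_dot_real hA.1 z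
  have hyz : star y ⬝ᵥ (A *ᵥ z) = star s := by
    rw [hs, ← herm_swap hA.1 z y, star_dotProduct]
  set c : ℂ := s / (qz : ℂ) with hc
  have hexp : star (y - c • z) ⬝ᵥ (A *ᵥ (y - c • z))
      = star y ⬝ᵥ (A *ᵥ y) - ((Complex.normSq s / qz : ℝ) : ℂ) := by
    simp only [mulVec_sub, mulVec_smul, star_sub, star_smul, sub_dotProduct,
      dotProduct_sub, smul_dotProduct, dotProduct_smul, smul_eq_mul]
    rw [hAz, hyz, hc]
    rw [show (star s : ℂ) = (starRingEnd ℂ) s from rfl,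
      show (star (s / (qz:ℂ)) : ℂ) = (starRingEnd ℂ) (s / (qz:ℂ)) from rfl]
    rw [map_div₀, Complex.conj_ofReal]
    rw [show ((Complex.normSq s / qz : ℝ) : ℂ) = (Complex.normSq s : ℂ) / (qz : ℂ) by push_cast; ring]
    rw [← Complex.mul_conj]
    field_simp
    ring
  have h := hA.re_dotProduct_nonneg (y - c • z)
  rw [hexp, RCLike.re_to_complex, Complex.sub_re, Complex.ofReal_re] at h
  have : Complex.normSq s / qz ≤ qf A y := by unfold qf; linarith
  calc Complex.normSq s = (Complex.normSq s / qz) * qz := by field_simp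
  _ ≤ qf A y * qz := mul_le_mul_of_nonneg_right this (le_of_lt hz)
  _ = qf A z * qf A y := by rw [hqz]; ring

end CS

noncomputable section MFormula
variable {N : ℕ}

theorem dot_self_real (u : Fin N → ℂ) :
    star u ⬝ᵥ u = (((star u ⬝ᵥ u).re : ℝ) : ℂ) := by
  have h : star (star u ⬝ᵥ u) = star u ⬝ᵥ u := by
    conv_lhs => rw [star_dotProduct u u, star_star]
  exact ((Complex.conj_eq_iff_re).mp h).symm

theorem dot_self_pos {u : Fin N → ℂ} (hu : u ≠ 0) : 0 < (star u ⬝ᵥ u).re := by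
  have hre : (star u ⬝ᵥ u).re = ∑ i, Complex.normSq (u i) := by
    simp only [dotProduct, Pi.star_apply, Complex.re_sum]
    exact Finset.sum_congr rfl fun i _ => by
      rw [show (star (u i) : ℂ) * u i = (starRingEnd ℂ) (u i) * u i from rfl,
        mul_comm, Complex.mul_conj]
      simp
  rw [hre]
  obtain ⟨i, hi⟩ := Function.ne_iff.mp hu
  refine Finset.sum_pos' (fun j _ => Complex.normSq_nonneg _) ⟨i, Finset.mem_univ i, ?_⟩
  exact Complex.normSq_pos.mpr hi

/-- The main recovery lemma: if the strength functions of two effects agree on all unit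
vectors, then `qf A z ≤ qf B z` whenever `qf A z > 0`. -/
theorem qf_le_of_minf_eq {A B : Matrix (Fin N) (Fin N) ℂ} (hA : A.PosSemidef)
    (hB : B.PosSemidef)
    (H : ∀ x : Fin N → ℂ, star x ⬝ᵥ x = 1 → sInf (mset A x) = sInf (mset B x))
    (z : Fin N → ℂ) (hz : 0 < qf A z) : qf A z ≤ qf B z := by
  set u : Fin N → ℂ := A *ᵥ z with hu
  set qz : ℝ := qf A z with hqz
  have hqzne : qz ≠ 0 := ne_of_gt hz
  have hune : u ≠ 0 := by
    intro h
    rw [hqz] at hz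
    unfold qf at hz
    rw [← hu, h, dotProduct_zero] at hz
    simp at hz
  set c0 : ℝ := (star u ⬝ᵥ u).re with hc0
  have hc0pos : 0 < c0 := dot_self_pos hune
  set r0 : ℝ := Real.sqrt c0 with hr0
  have hr0pos : 0 < r0 := Real.sqrt_pos.mpr hc0pos
  have hr0sq : r0 * r0 = c0 := Real.mul_self_sqrt (le_of_lt hc0pos)
  set x : Fin N → ℂ := ((r0⁻¹ : ℝ) : ℂ) • u with hxdef
  have huz : star u ⬝ᵥ z = (qz : ℂ) := by
    rw [hu, herm_swap hA.1 z z, herm_dot_real hA.1 z, hqz]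
    rfl
  have hstarx : ∀ w : Fin N → ℂ, star x ⬝ᵥ w = ((r0⁻¹ : ℝ) : ℂ) * (star u ⬝ᵥ w) := by
    intro w
    rw [hxdef, star_smul, smul_dotProduct]
    congr 1
    simp [Complex.conj_ofReal]
  have hx : star x ⬝ᵥ x = 1 := by
    rw [hstarx, hxdef, dotProduct_smul, dot_self_real u, ← hc0]
    simp only [smul_eq_mul]
    rw [← Complex.ofReal_mul, ← Complex.ofReal_mul]
    rw [show r0⁻¹ * (r0⁻¹ * c0) = 1 from by field_simp; nlinarith [hr0sq]]
    norm_num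
  -- the value of sInf (mset A x)
  have hmA : sInf (mset A x) = c0 / qz := by
    apply le_antisymm
    · have h1 : star x ⬝ᵥ (((r0 / qz : ℝ) : ℂ) • z) = 1 := by
        rw [hstarx, dotProduct_smul, huz, smul_eq_mul]
        rw [← Complex.ofReal_mul, ← Complex.ofReal_mul]
        rw [show r0⁻¹ * (r0 / qz * qz) = 1 by field_simp]
        norm_cast
      have h2 : qf A (((r0 / qz : ℝ) : ℂ) • z) = c0 / qz := by
        rw [qf_smul, Complex.normSq_ofReal, ← hqz]
        rw [show r0 / qz * (r0 / qz) * qz = (r0 * r0) / qz by field_simp, hr0sq]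
      exact le_trans (csInf_le (mset_bddBelow hA x) ⟨_, h1, h2.symm⟩) (le_of_eq rfl)
    · refine le_csInf ⟨qf A (((r0 / qz : ℝ) : ℂ) • z), _, by
        rw [hstarx, dotProduct_smul, huz, smul_eq_mul]
        rw [← Complex.ofReal_mul, ← Complex.ofReal_mul]
        rw [show r0⁻¹ * (r0 / qz * qz) = 1 by field_simp]
        norm_cast, rfl⟩ ?_
      rintro r ⟨y, hy, rfl⟩
      have hsy : star u ⬝ᵥ y = (r0 : ℂ) := by
        rw [hstarx] at hy
        have : ((r0 : ℝ) : ℂ) ≠ 0 := by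
          simp only [ne_eq, Complex.ofReal_eq_zero]
          exact ne_of_gt hr0pos
        rw [Complex.ofReal_inv] at hy
        field_simp at hy
        exact hy
      have hcs := cauchy_schwarz hA (by rw [← hqz]; exact hz) y
      rw [← herm_swap hA.1 z y, ← hu, hsy, Complex.normSq_ofReal, hr0sq, ← hqz] at hcs
      rw [div_le_iff₀ hz]
      linarith [hcs]
  -- use the hypothesis to transfer to B
  have hxz : Complex.normSq (star x ⬝ᵥ z) = qz * qz / c0 := by
    rw [hstarx, huz, ← Complex.ofReal_mul, Complex.normSq_ofReal]
    rw [show r0⁻¹ * qz * (r0⁻¹ * qz) = qz * qz / (r0 * r0) by field_simp, hr0sq]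
  have hkey := key_easy hB hx z
  rw [← H x hx, hmA, hxz] at hkey
  rw [show c0 / qz * (qz * qz / c0) = qz by field_simp] at hkey
  rw [hqz] at hkey ⊢
  exact hkey

end MFormula

theorem qf_eq_of_minf_eq {N : ℕ} {A B : Matrix (Fin N) (Fin N) ℂ} (hA : A.PosSemidef)
    (hB : B.PosSemidef)
    (H : ∀ x : Fin N → ℂ, star x ⬝ᵥ x = 1 → sInf (mset A x) = sInf (mset B x))
    (z : Fin N → ℂ) : qf A z = qf B z := by
  by_cases hz : 0 < qf A z
  · have h1 := qf_le_of_minf_eq hA hB H z hz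
    have h2 := qf_le_of_minf_eq hB hA (fun x hx => (H x hx).symm) z (lt_of_lt_of_le hz h1)
    linarith
  · have h0 : qf A z = 0 := le_antisymm (not_lt.mp hz) (hA.re_dotProduct_nonneg z)
    by_cases hz' : 0 < qf B z
    · have h2 := qf_le_of_minf_eq hB hA (fun x hx => (H x hx).symm) z hz'
      linarith [hA.re_dotProduct_nonneg z]
    · have h0' : qf B z = 0 := le_antisymm (not_lt.mp hz') (hB.re_dotProduct_nonneg z)
      rw [h0, h0']

theorem eq_of_qf_eq {N : ℕ} {A B : Matrix (Fin N) (Fin N) ℂ} (hA : A.IsHermitian)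
    (hB : B.IsHermitian) (H : ∀ z, qf A z = qf B z) : A = B := by
  set M := A - B with hM
  have hMh : M.IsHermitian := hA.sub hB
  have hzero : ∀ z : Fin N → ℂ, star z ⬝ᵥ (M *ᵥ z) = 0 := by
    intro z
    rw [hM, sub_mulVec, dotProduct_sub, herm_dot_real hA, herm_dot_real hB]
    have := H z
    unfold qf at this
    rw [this]
    ring
  have hT : Matrix.toEuclideanLin M = 0 := by
    rw [← inner_map_self_eq_zero]
    intro v
    have : (inner ℂ (Matrix.toEuclideanLin M v) v : ℂ)
        = star (M *ᵥ (WithLp.equiv 2 _ v)) ⬝ᵥ (WithLp.equiv 2 _ v) := by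
      simp only [PiLp.inner_apply, RCLike.inner_apply, dotProduct, Pi.star_apply]
      exact Finset.sum_congr rfl fun i _ => mul_comm _ _
    rw [this, herm_swap hMh, hzero]
  have : M = 0 := by
    have := Matrix.toEuclideanLin.injective (by rw [hT, map_zero] :
      Matrix.toEuclideanLin M = Matrix.toEuclideanLin 0)
    exact this
  rw [← sub_eq_zero]
  exact this

theorem effect_eq_iff_sup_eq {n : ℕ} {A B : Matrix (Fin n) (Fin n) ℂ}
    (hA : IsEffect A) (hB : IsEffect B) :
    A = B ↔
      ∀ P : Matrix (Fin n) (Fin n) ℂ, P.IsHermitian → P * P = P → P.rank = 1 →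
        sSup {t : ℝ | t ∈ Set.Icc (0 : ℝ) 1 ∧ (A - (t : ℂ) • P).PosSemidef} =
        sSup {t : ℝ | t ∈ Set.Icc (0 : ℝ) 1 ∧ (B - (t : ℂ) • P).PosSemidef} := by
  constructor
  · rintro rfl
    intro P _ _ _
    rfl
  · intro H
    have Hm : ∀ x : Fin n → ℂ, star x ⬝ᵥ x = 1 → sInf (mset A x) = sInf (mset B x) := by
      intro x hx
      have h := H (vecMulVec x (star x)) (P_herm x) (P_idem x hx) (P_rank x hx)
      rwa [sup_eq_msInf hA hx, sup_eq_msInf hB hx] at h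
    exact eq_of_qf_eq hA.1.1 hB.1.1 (qf_eq_of_minf_eq hA.1 hB.1 Hm)
end

section
/- If P is a rank-one projection and Q is any projection commuting with P, then the second commutant {P, Q}'' within the set of projections has at most 8 elements. -/
open Matrix ComplexOrder

/-- The set of `n × n` Hermitian projections. -/
def ProjSet (n : ℕ) : Set (Matrix (Fin n) (Fin n) ℂ) :=
  {P | P.IsHermitian ∧ P * P = P}

/-- The commutant of a set of projections within the set of projections. -/
def ProjComm {n : ℕ} (S : Set (Matrix (Fin n) (Fin n) ℂ)) : Set (Matrix (Fin n) (Fin n) ℂ) :=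
  {R ∈ ProjSet n | ∀ Q ∈ S, R * Q = Q * R}

set_option linter.unusedVariables false

variable {n : ℕ}

abbrev MC (n : ℕ) := Matrix (Fin n) (Fin n) ℂ

lemma myext {A B : MC n} (h : ∀ x, A *ᵥ x = B *ᵥ x) : A = B := by
  ext i j
  have := congrFun (h (Pi.single j 1)) i
  simpa using this

lemma vmv_mul (v w : Fin n → ℂ) (M : MC n) :
    vecMulVec v w * M = vecMulVec v (w ᵥ* M) := by
  ext i j
  simp only [mul_apply, vecMulVec_apply, vecMul, dotProduct, Finset.mul_sum]
  exact Finset.sum_congr rfl fun k _ => by ring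

lemma mul_vmv (M : MC n) (v w : Fin n → ℂ) :
    M * vecMulVec v w = vecMulVec (M *ᵥ v) w := by
  ext i j
  simp only [mul_apply, vecMulVec_apply, mulVec, dotProduct, Finset.sum_mul]
  exact Finset.sum_congr rfl fun k _ => by ring

lemma vmv_mulVec (v w x : Fin n → ℂ) : vecMulVec v w *ᵥ x = (w ⬝ᵥ x) • v := by
  ext i
  simp only [mulVec, dotProduct, vecMulVec_apply, Pi.smul_apply, smul_eq_mul, Finset.sum_mul]
  exact Finset.sum_congr rfl fun k _ => by ring

lemma vmv_mul_vmv (v w x y : Fin n → ℂ) :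
    vecMulVec v w * vecMulVec x y = (w ⬝ᵥ x) • vecMulVec v y := by
  ext i j
  simp only [mul_apply, vecMulVec_apply, dotProduct, Pi.smul_apply, Matrix.smul_apply, smul_eq_mul,
    Finset.sum_mul]
  exact Finset.sum_congr rfl fun k _ => by ring

lemma vmv_herm (v : Fin n → ℂ) : (vecMulVec v (star v))ᴴ = vecMulVec v (star v) := by
  ext i j
  simp only [conjTranspose_apply, vecMulVec_apply, Pi.star_apply, star_mul', star_star]
  ring

lemma star_dps (v : Fin n → ℂ) : star (star v ⬝ᵥ v) = star v ⬝ᵥ v := by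
  simp only [dotProduct, star_sum, star_mul', Pi.star_apply, star_star]
  exact Finset.sum_congr rfl fun k _ => mul_comm _ _

/-- `G` is a projection commuting with `P` and `Q` that is moreover dominated by or
orthogonal to each of them. -/
def Nice (P Q G : MC n) : Prop :=
  G ∈ ProjSet n ∧ (P * G = G * P) ∧ (P * G = 0 ∨ P * G = G) ∧
    (Q * G = G * Q) ∧ (Q * G = 0 ∨ Q * G = G)

lemma eigen {P Q G R : MC n} (hPh : P.IsHermitian) (hQh : Q.IsHermitian)
    (hG : Nice P Q G) (hR : R ∈ ProjComm (ProjComm {P, Q}))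
    {v : Fin n → ℂ} (hv : G *ᵥ v = v) : ∃ c : ℂ, R *ᵥ v = c • v := by
  by_cases hv0 : v = 0
  · exact ⟨0, by simp [hv0]⟩
  set d : ℂ := star v ⬝ᵥ v with hd
  have hd0 : d ≠ 0 := fun h => hv0 ((dotProduct_star_self_eq_zero (v := v)).mp h)
  set N : MC n := vecMulVec v (star v) with hN
  set F : MC n := d⁻¹ • N with hF
  have key : ∀ X : MC n, X.IsHermitian → (X * G = 0 ∨ X * G = G) → X * F = F * X := by
    intro X hXh hXd
    have hXv : X *ᵥ v = (X * G) *ᵥ v := by rw [← mulVec_mulVec, hv]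
    have hmul : X * F = d⁻¹ • vecMulVec (X *ᵥ v) (star v) := by
      rw [hF, mul_smul_comm, hN, mul_vmv]
    have hsvX : star v ᵥ* X = star (X *ᵥ v) := by
      rw [star_mulVec, hXh.eq]
    have hmul2 : F * X = d⁻¹ • vecMulVec v (star (X *ᵥ v)) := by
      rw [hF, smul_mul_assoc, hN, vmv_mul, hsvX]
    rcases hXd with h | h
    · have h0 : X *ᵥ v = 0 := by rw [hXv, h, zero_mulVec]
      rw [hmul, hmul2, h0]
      simp [vecMulVec]
    · have h1 : X *ᵥ v = v := by rw [hXv, h, hv]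
      rw [hmul, hmul2, h1]
  have hFP : F ∈ ProjSet n := by
    constructor
    · show Fᴴ = F
      rw [hF, conjTranspose_smul, hN, vmv_herm, star_inv₀, hd, star_dps]
    · rw [hF, smul_mul_smul_comm, hN, vmv_mul_vmv, ← hd, smul_smul,
        mul_assoc, inv_mul_cancel₀ hd0, mul_one]
  have hFmem : F ∈ ProjComm {P, Q} := by
    refine ⟨hFP, fun X hX => ?_⟩
    rcases hX with rfl | hX
    · exact (key X hPh hG.2.2.1).symm
    · rw [Set.mem_singleton_iff] at hX
      subst hX
      exact (key X hQh hG.2.2.2.2).symm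
  have hRF : R * F = F * R := hR.2 F hFmem
  have hFv : F *ᵥ v = v := by
    rw [hF, smul_mulVec, hN, vmv_mulVec, ← hd, smul_smul, inv_mul_cancel₀ hd0, one_smul]
  have happ : R *ᵥ v = F *ᵥ (R *ᵥ v) := by
    conv_lhs => rw [← hFv, mulVec_mulVec, hRF, ← mulVec_mulVec]
  refine ⟨d⁻¹ * (star v ⬝ᵥ (R *ᵥ v)), ?_⟩
  have hcalc : F *ᵥ (R *ᵥ v) = (d⁻¹ * (star v ⬝ᵥ (R *ᵥ v))) • v := by
    rw [hF, smul_mulVec, hN, vmv_mulVec, smul_smul]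
  exact happ.trans hcalc

lemma scalar_lemma {P Q G R : MC n} (hPh : P.IsHermitian) (hQh : Q.IsHermitian)
    (hG : Nice P Q G) (hR : R ∈ ProjComm (ProjComm {P, Q})) :
    R * G = 0 ∨ R * G = G := by
  obtain ⟨⟨hGh, hGi⟩, hGP, hGPd, hGQ, hGQd⟩ := hG
  have hGn : Nice P Q G := ⟨⟨hGh, hGi⟩, hGP, hGPd, hGQ, hGQd⟩
  by_cases hG0 : G = 0
  · left; rw [hG0, mul_zero]
  have hex : ∃ x, G *ᵥ x ≠ 0 := by
    by_contra h
    push_neg at h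
    exact hG0 (myext fun x => by rw [h x, zero_mulVec])
  obtain ⟨x, hx⟩ := hex
  set v0 : Fin n → ℂ := G *ᵥ x with hv0def
  have hv0 : G *ᵥ v0 = v0 := by rw [hv0def, mulVec_mulVec, hGi]
  obtain ⟨c, hc⟩ := eigen hPh hQh hGn hR hv0
  have huni : ∀ v, G *ᵥ v = v → R *ᵥ v = c • v := by
    intro v hv
    by_cases hvz : v = 0
    · rw [hvz]; simp
    obtain ⟨a, ha⟩ := eigen hPh hQh hGn hR hv
    obtain ⟨b, hb⟩ := eigen hPh hQh hGn hR
      (show G *ᵥ (v + v0) = v + v0 by rw [mulVec_add, hv, hv0])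
    have h2 : a • v + c • v0 = b • v + b • v0 := by
      rw [← ha, ← hc, ← mulVec_add, hb, smul_add]
    have h3 : (a - b) • v = (b - c) • v0 := by
      rw [sub_smul, sub_smul]
      linear_combination (norm := module) h2
    have hac : a = c := by
      by_cases hbc : b = c
      · have h4 : (a - b) • v = 0 := by rw [h3, hbc, sub_self, zero_smul]
        rcases smul_eq_zero.mp h4 with h5 | h5
        · exact (sub_eq_zero.mp h5).trans hbc
        · exact absurd h5 hvz
      · have hv0eq : v0 = ((b - c)⁻¹ * (a - b)) • v := by
          rw [mul_smul, h3, smul_smul, inv_mul_cancel₀ (sub_ne_zero.mpr hbc), one_smul]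
        have hv0ne : v0 ≠ 0 := hx
        have hsne : (b - c)⁻¹ * (a - b) ≠ 0 := by
          intro h
          exact hv0ne (by rw [hv0eq, h, zero_smul])
        have hca : c • v0 = a • v0 := by
          rw [← hc, hv0eq, mulVec_smul, ha, smul_smul, smul_smul, mul_comm]
        have : (c - a) • v0 = 0 := by rw [sub_smul, hca, sub_self]
        rcases smul_eq_zero.mp this with h5 | h5
        · exact (sub_eq_zero.mp h5).symm
        · exact absurd h5 hv0ne
    rw [ha, hac]
  have hRG : R * G = c • G := by
    apply myext
    intro y
    rw [← mulVec_mulVec, smul_mulVec]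
    exact huni (G *ᵥ y) (by rw [mulVec_mulVec, hGi])
  have hGmem : G ∈ ProjComm {P, Q} := by
    refine ⟨⟨hGh, hGi⟩, fun X hX => ?_⟩
    rcases hX with rfl | hX
    · exact hGP.symm
    · rw [Set.mem_singleton_iff] at hX; subst hX; exact hGQ.symm
  have hRGc : R * G = G * R := hR.2 G hGmem
  have hRi : R * R = R := hR.1.2
  have hidem : (R * G) * (R * G) = R * G := by
    calc (R * G) * (R * G) = R * ((G * R) * G) := by rw [mul_assoc, mul_assoc]
      _ = R * ((R * G) * G) := by rw [hRGc]
      _ = R * (R * (G * G)) := by rw [mul_assoc]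
      _ = (R * R) * G := by rw [hGi, mul_assoc]
      _ = R * G := by rw [hRi]
  rw [hRG] at hidem
  rw [smul_mul_smul_comm, hGi] at hidem
  have hccc : (c * c - c) • G = 0 := by rw [sub_smul, hidem, sub_self]
  rcases smul_eq_zero.mp hccc with h5 | h5
  · have : c * (c - 1) = 0 := by ring_nf; linear_combination h5
    rcases mul_eq_zero.mp this with h6 | h6
    · left; rw [hRG, h6, zero_smul]
    · right; rw [hRG, sub_eq_zero.mp h6, one_smul]
  · exact absurd h5 hG0

lemma main_of_three {P Q G1 G2 G3 : MC n} (hPh : P.IsHermitian) (hQh : Q.IsHermitian)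
    (h1 : Nice P Q G1) (h2 : Nice P Q G2) (h3 : Nice P Q G3)
    (hsum : G1 + G2 + G3 = 1) :
    (ProjComm (ProjComm {P, Q})).Finite ∧ (ProjComm (ProjComm {P, Q})).ncard ≤ 8 := by
  set f : Bool × Bool × Bool → MC n := fun b =>
    (cond b.1 G1 0) + (cond b.2.1 G2 0) + (cond b.2.2 G3 0) with hf
  have hsub : ProjComm (ProjComm {P, Q}) ⊆ Set.range f := by
    intro R hR
    have e1 := scalar_lemma hPh hQh h1 hR
    have e2 := scalar_lemma hPh hQh h2 hR
    have e3 := scalar_lemma hPh hQh h3 hR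
    have hRsum : R * G1 + R * G2 + R * G3 = R := by
      rw [← mul_add, ← mul_add, hsum, mul_one]
    rcases e1 with ha | ha <;> rcases e2 with hb | hb <;> rcases e3 with hc | hc
    · exact ⟨(false, false, false), by
        simp only [hf, cond_false]; rw [← hRsum, ha, hb, hc]⟩
    · exact ⟨(false, false, true), by
        simp only [hf, cond_false, cond_true]; rw [← hRsum, ha, hb, hc]⟩
    · exact ⟨(false, true, false), by
        simp only [hf, cond_false, cond_true]; rw [← hRsum, ha, hb, hc]⟩
    · exact ⟨(false, true, true), by
        simp only [hf, cond_false, cond_true]; rw [← hRsum, ha, hb, hc]⟩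
    · exact ⟨(true, false, false), by
        simp only [hf, cond_false, cond_true]; rw [← hRsum, ha, hb, hc]⟩
    · exact ⟨(true, false, true), by
        simp only [hf, cond_false, cond_true]; rw [← hRsum, ha, hb, hc]⟩
    · exact ⟨(true, true, false), by
        simp only [hf, cond_false, cond_true]; rw [← hRsum, ha, hb, hc]⟩
    · exact ⟨(true, true, true), by
        simp only [hf, cond_true]; rw [← hRsum, ha, hb, hc]⟩
  refine ⟨(Set.finite_range f).subset hsub, ?_⟩
  calc (ProjComm (ProjComm {P, Q})).ncard ≤ (Set.range f).ncard :=
        Set.ncard_le_ncard hsub (Set.finite_range f)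
    _ = (f '' Set.univ).ncard := by rw [Set.image_univ]
    _ ≤ (Set.univ : Set (Bool × Bool × Bool)).ncard := Set.ncard_image_le Set.finite_univ
    _ = 8 := by rw [Set.ncard_univ]; simp [Nat.card_eq_fintype_card]

lemma dichotomy {P Q : MC n} (hPi : P * P = P) (hQi : Q * Q = Q)
    (hPrk : P.rank = 1) (hcomm : P * Q = Q * P) :
    P * Q = 0 ∨ P * Q = P := by
  have hA2 : (P * Q) * (P * Q) = P * Q := by
    calc (P * Q) * (P * Q) = (P * (Q * P)) * Q := by
          rw [mul_assoc P Q (P * Q), ← mul_assoc Q P Q, ← mul_assoc P (Q * P) Q]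
      _ = (P * (P * Q)) * Q := by rw [hcomm]
      _ = P * Q := by rw [← mul_assoc P P Q, hPi, mul_assoc, hQi]
  have hAP : (P * Q) * P = P * Q := by
    rw [mul_assoc, ← hcomm, ← mul_assoc, hPi]
  by_cases hA0 : P * Q = 0
  · exact Or.inl hA0
  right
  have hle : LinearMap.range (P * Q).mulVecLin ≤ LinearMap.range P.mulVecLin := by
    rintro y ⟨x, rfl⟩
    exact ⟨Q *ᵥ x, by simp [mulVecLin_apply, mulVec_mulVec]⟩
  have hne : LinearMap.range (P * Q).mulVecLin ≠ ⊥ := by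
    intro h
    apply hA0
    apply myext
    intro x
    have : (P * Q).mulVecLin x ∈ (⊥ : Submodule ℂ (Fin n → ℂ)) := h ▸ LinearMap.mem_range_self _ x
    simpa [mulVecLin_apply] using this
  have hfr1 : Module.finrank ℂ (LinearMap.range P.mulVecLin) = 1 := hPrk
  have hfrA : 1 ≤ Module.finrank ℂ (LinearMap.range (P * Q).mulVecLin) := by
    by_contra h
    push_neg at h
    interval_cases h' : Module.finrank ℂ (LinearMap.range (P * Q).mulVecLin)
    · exact hne (Submodule.finrank_eq_zero.mp h')
  have heq : LinearMap.range (P * Q).mulVecLin = LinearMap.range P.mulVecLin :=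
    Submodule.eq_of_le_of_finrank_le hle (by rw [hfr1]; exact hfrA)
  apply myext
  intro x
  have hmem : P *ᵥ x - (P * Q) *ᵥ x ∈ LinearMap.range (P * Q).mulVecLin := by
    rw [heq]
    exact Submodule.sub_mem _ ⟨x, rfl⟩ ⟨Q *ᵥ x, by simp [mulVecLin_apply, mulVec_mulVec]⟩
  obtain ⟨y, hy⟩ := hmem
  rw [mulVecLin_apply] at hy
  have h0 : (P * Q) *ᵥ (P *ᵥ x - (P * Q) *ᵥ x) = 0 := by
    rw [mulVec_sub, mulVec_mulVec, mulVec_mulVec, hAP, hA2, sub_self]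
  have h1 : (P * Q) *ᵥ ((P * Q) *ᵥ y) = (P * Q) *ᵥ y := by
    rw [mulVec_mulVec, hA2]
  rw [hy] at h1
  rw [h0] at h1
  exact (sub_eq_zero.mp h1.symm).symm

theorem second_commutant_card_le_eight {n : ℕ} (hn : 3 ≤ n)
    {P Q : Matrix (Fin n) (Fin n) ℂ}
    (hP : P ∈ ProjSet n) (hPrk : P.rank = 1)
    (hQ : Q ∈ ProjSet n) (hcomm : P * Q = Q * P) :
    (ProjComm (ProjComm {P, Q})).Finite ∧
    (ProjComm (ProjComm {P, Q})).ncard ≤ 8 := by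

  obtain ⟨hPh, hPi⟩ := hP
  obtain ⟨hQh, hQi⟩ := hQ
  rcases dichotomy hPi hQi hPrk hcomm with hA | hA
  · -- P*Q = 0
    have hQP : Q * P = 0 := by rw [← hcomm, hA]
    have h1 : Nice P Q P :=
      ⟨⟨hPh, hPi⟩, rfl, Or.inr hPi, hcomm.symm, Or.inl hQP⟩
    have h2 : Nice P Q Q :=
      ⟨⟨hQh, hQi⟩, hcomm, Or.inl hA, rfl, Or.inr hQi⟩
    have hG3h : (1 - P - Q).IsHermitian := (isHermitian_one.sub hPh).sub hQh
    have hG3i : (1 - P - Q) * (1 - P - Q) = 1 - P - Q := by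
      simp only [sub_mul, mul_sub, one_mul, mul_one, hPi, hQi, hA, hQP, sub_zero]
      abel
    have hPG3 : P * (1 - P - Q) = 0 := by
      simp only [mul_sub, mul_one, hPi, hA, sub_zero, sub_self]
    have hG3P : (1 - P - Q) * P = 0 := by
      simp only [sub_mul, one_mul, hPi, hQP, sub_zero, sub_self]
    have hQG3 : Q * (1 - P - Q) = 0 := by
      simp only [mul_sub, mul_one, hQi, hQP, sub_zero, sub_self]
    have hG3Q : (1 - P - Q) * Q = 0 := by
      simp only [sub_mul, one_mul, hQi, hA, sub_zero, sub_self]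
    have h3 : Nice P Q (1 - P - Q) :=
      ⟨⟨hG3h, hG3i⟩, by rw [hPG3, hG3P], Or.inl hPG3, by rw [hQG3, hG3Q], Or.inl hQG3⟩
    exact main_of_three hPh hQh h1 h2 h3 (by abel)
  · -- P*Q = P
    have hQP : Q * P = P := by rw [← hcomm, hA]
    have h1 : Nice P Q P :=
      ⟨⟨hPh, hPi⟩, rfl, Or.inr hPi, hcomm.symm, Or.inr hQP⟩
    have hG2h : (Q - P).IsHermitian := hQh.sub hPh
    have hG2i : (Q - P) * (Q - P) = Q - P := by
      simp only [sub_mul, mul_sub, hPi, hQi, hA, hQP]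
      abel
    have hPG2 : P * (Q - P) = 0 := by
      simp only [mul_sub, hPi, hA, sub_self]
    have hG2P : (Q - P) * P = 0 := by
      simp only [sub_mul, hPi, hQP, sub_self]
    have hQG2 : Q * (Q - P) = Q - P := by
      simp only [mul_sub, hQi, hQP]
    have hG2Q : (Q - P) * Q = Q - P := by
      simp only [sub_mul, hQi, hA]
    have h2 : Nice P Q (Q - P) :=
      ⟨⟨hG2h, hG2i⟩, by rw [hPG2, hG2P], Or.inl hPG2, by rw [hQG2, hG2Q], Or.inr hQG2⟩
    have hG3h : (1 - Q : MC n).IsHermitian := isHermitian_one.sub hQh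
    have hG3i : (1 - Q) * (1 - Q) = (1 - Q : MC n) := by
      simp only [sub_mul, mul_sub, one_mul, mul_one, hQi]
      abel
    have hPG3 : P * (1 - Q) = 0 := by
      simp only [mul_sub, mul_one, hA, sub_self]
    have hG3P : (1 - Q) * P = 0 := by
      simp only [sub_mul, one_mul, hQP, sub_self]
    have hQG3 : Q * (1 - Q) = 0 := by
      simp only [mul_sub, mul_one, hQi, sub_self]
    have hG3Q : (1 - Q) * Q = 0 := by
      simp only [sub_mul, one_mul, hQi, sub_self]
    have h3 : Nice P Q (1 - Q) :=
      ⟨⟨hG3h, hG3i⟩, by rw [hPG3, hG3P], Or.inl hPG3, by rw [hQG3, hG3Q], Or.inl hQG3⟩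
    exact main_of_three hPh hQh h1 h2 h3 (by abel)
end

section
/- If P is a projection whose rank and corank are both at least 2, then there exists a projection Q commuting with P such that the second commutant {P, Q}'' within the set of projections has exactly 16 elements. -/
open Matrix ComplexOrder

/-!
Diagonalising `P` by a unitary, which acts as a ⋆-automorphism and hence transports commutants,
we may take `P = diag p` for a 0/1 vector `p` with at least two 1s and two 0s. Choose a 0/1 vector
`q` such that all four pairs `(p i, q i)` occur and put `Q = diag q`. Colouring each index `i` by
`(p i, q i)`, the commutant `{P, Q}'` consists of the projections that are block diagonal for the
four colour classes; it contains the diagonal units `E_ii` and, for `i ≠ j` of the same colour,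
the projection onto `e_i + e_j`. So `{P, Q}''` consists of the diagonal projections constant on
each colour class: one for each of the `2 ^ 4` subsets of colours.
-/

open Unitary

variable {n : ℕ}

lemma diagonal_mem_projSet {v : Fin n → ℂ} (hv : ∀ i, v i = 0 ∨ v i = 1) :
    diagonal v ∈ ProjSet n := by
  refine ⟨isHermitian_diagonal_iff.2 fun i => ?_, ?_⟩
  · rcases hv i with h | h <;> simp [h]
  · rw [diagonal_mul_diagonal]
    congr with i
    exact IsIdempotentElem.iff_eq_zero_or_one.2 (hv i)

lemma mul_diagonal_eq_diagonal_mul_iff {ι α : Type*} [Fintype ι] [DecidableEq ι]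
    [NonUnitalNonAssocSemiring α] {R : Matrix ι ι α} {v : ι → α} :
    R * diagonal v = diagonal v * R ↔ ∀ i j, R i j * v j = v i * R i j := by
  simp only [← Matrix.ext_iff, mul_diagonal, diagonal_mul]

section StarAlgEquiv

variable (φ : Matrix (Fin n) (Fin n) ℂ ≃⋆ₐ[ℂ] Matrix (Fin n) (Fin n) ℂ)

lemma map_mem_projSet_iff {A : Matrix (Fin n) (Fin n) ℂ} : φ A ∈ ProjSet n ↔ A ∈ ProjSet n := by
  simp only [ProjSet, Set.mem_ofPred_eq, IsHermitian, ← star_eq_conjTranspose, ← map_star,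
    ← map_mul, EmbeddingLike.apply_eq_iff_eq]

lemma projComm_image (S : Set (Matrix (Fin n) (Fin n) ℂ)) :
    ProjComm (φ '' S) = φ '' ProjComm S := by
  ext R
  obtain ⟨A, rfl⟩ := EquivLike.surjective φ R
  rw [(EquivLike.injective φ).mem_set_image]
  simp only [ProjComm, Set.mem_ofPred_eq, map_mem_projSet_iff, Set.forall_mem_image, ← map_mul,
    EmbeddingLike.apply_eq_iff_eq]

lemma ncard_projComm_projComm_image (S : Set (Matrix (Fin n) (Fin n) ℂ)) :
    (ProjComm (ProjComm (φ '' S))).ncard = (ProjComm (ProjComm S)).ncard := by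
  rw [projComm_image, projComm_image, Set.ncard_image_of_injective _ (EquivLike.injective φ)]

end StarAlgEquiv

lemma Matrix.IsHermitian.eigenvalues_eq_zero_or_one {ι 𝕜 : Type*} [Fintype ι] [DecidableEq ι]
    [RCLike 𝕜] {A : Matrix ι ι 𝕜} (hA : A.IsHermitian) (hidem : A * A = A) (i : ι) :
    hA.eigenvalues i = 0 ∨ hA.eigenvalues i = 1 := by
  set φ := conjStarAlgAut 𝕜 _ hA.eigenvectorUnitary
  have hD : diagonal (RCLike.ofReal ∘ hA.eigenvalues) * diagonal (RCLike.ofReal ∘ hA.eigenvalues)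
      = (diagonal (RCLike.ofReal ∘ hA.eigenvalues) : Matrix ι ι 𝕜) := by
    apply EquivLike.injective φ
    rw [map_mul, ← hA.spectral_theorem, hidem]
  have hi := congr_fun₂ hD i i
  simp only [diagonal_mul_diagonal, diagonal_apply_eq, Function.comp_apply] at hi
  exact IsIdempotentElem.iff_eq_zero_or_one.1 (by exact_mod_cast hi)

lemma exists_surjective_prod_of_two_le_card {ι : Type*} [Fintype ι] [DecidableEq ι] {p : ι → Prop}
    [DecidablePred p] (h₁ : 2 ≤ Fintype.card {i // p i}) (h₀ : 2 ≤ Fintype.card {i // ¬p i}) :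
    ∃ q : ι → Bool, Function.Surjective fun i => (decide (p i), q i) := by
  obtain ⟨⟨i₀, hi₀⟩, ⟨i₁, hi₁⟩, hi⟩ := Fintype.exists_pair_of_one_lt_card h₁
  obtain ⟨⟨j₀, hj₀⟩, ⟨j₁, hj₁⟩, hj⟩ := Fintype.exists_pair_of_one_lt_card h₀
  simp only [ne_eq, Subtype.mk.injEq] at hi hj
  refine ⟨fun i => decide (i = i₀ ∨ i = j₀), ?_⟩
  rintro ⟨_ | _, _ | _⟩
  · exact ⟨j₁, by grind [Prod.mk.injEq]⟩
  · exact ⟨j₀, by grind [Prod.mk.injEq]⟩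
  · exact ⟨i₁, by grind [Prod.mk.injEq]⟩
  · exact ⟨i₀, by grind [Prod.mk.injEq]⟩

section Block

variable {β : Type*}

noncomputable def blockProj (c : Fin n → β) (f : β → Bool) : Matrix (Fin n) (Fin n) ℂ :=
  diagonal fun i => if f (c i) then 1 else 0

def blockDiagonalProjSet (c : Fin n → β) : Set (Matrix (Fin n) (Fin n) ℂ) :=
  {R ∈ ProjSet n | ∀ i j, c i ≠ c j → R i j = 0}

lemma blockProj_mem_projSet (c : Fin n → β) (f : β → Bool) : blockProj c f ∈ ProjSet n :=
  diagonal_mem_projSet fun i => by cases f (c i) <;> simp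

lemma blockProj_injective {c : Fin n → β} (hc : Function.Surjective c) :
    Function.Injective (blockProj c) := by
  intro f g hfg
  funext b
  obtain ⟨i, rfl⟩ := hc b
  have hi := congr_fun₂ hfg i i
  simp only [blockProj, diagonal_apply_eq] at hi
  cases hf : f (c i) <;> cases hg : g (c i) <;> simp_all

lemma ncard_range_blockProj {c : Fin n → β} (hc : Function.Surjective c) :
    (Set.range (blockProj c)).ncard = 2 ^ Nat.card β := by
  have : Finite β := Finite.of_surjective c hc
  rw [← Set.image_univ, Set.ncard_image_of_injective _ (blockProj_injective hc), Set.ncard_univ,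
    Nat.card_fun]
  simp only [Nat.card_eq_fintype_card, Fintype.card_bool]

lemma blockProj_commute_of_mem_blockDiagonalProjSet {c : Fin n → β}
    {R : Matrix (Fin n) (Fin n) ℂ} (hR : R ∈ blockDiagonalProjSet c) (f : β → Bool) :
    R * blockProj c f = blockProj c f * R := by
  refine mul_diagonal_eq_diagonal_mul_iff.2 fun i j => ?_
  by_cases hij : c i = c j
  · rw [hij, mul_comm]
  · simp [hR.2 i j hij]

lemma projComm_image_blockProj {c : Fin n → β} {F : Set (β → Bool)}
    (hF : ∀ a b, (∀ f ∈ F, f a = f b) → a = b) :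
    ProjComm (blockProj c '' F) = blockDiagonalProjSet c := by
  ext R
  refine ⟨fun ⟨hR, hcomm⟩ => ⟨hR, fun i j hij => ?_⟩, fun hR => ⟨hR.1, ?_⟩⟩
  · obtain ⟨f, hf, hfij⟩ : ∃ f ∈ F, f (c i) ≠ f (c j) := by
      by_contra! h
      exact hij (hF _ _ h)
    have h := mul_diagonal_eq_diagonal_mul_iff.1 (hcomm _ ⟨f, hf, rfl⟩) i j
    cases hi : f (c i) <;> cases hj : f (c j) <;> simp_all
  · rintro _ ⟨f, -, rfl⟩
    exact blockProj_commute_of_mem_blockDiagonalProjSet hR f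

lemma diagonal_single_mem_blockDiagonalProjSet (c : Fin n → β) (i : Fin n) :
    diagonal (Pi.single i 1) ∈ blockDiagonalProjSet c := by
  refine ⟨diagonal_mem_projSet fun k => ?_, fun a b hab => ?_⟩
  · by_cases hk : k = i <;> simp [hk]
  · exact diagonal_apply_ne _ fun h => hab (congrArg c h)

noncomputable def pairProj (i j : Fin n) : Matrix (Fin n) (Fin n) ℂ :=
  (1 / 2 : ℂ) • vecMulVec (Pi.single i 1 + Pi.single j 1) (Pi.single i 1 + Pi.single j 1)

lemma pairProj_apply_left_right {i j : Fin n} (hij : i ≠ j) : pairProj i j i j = 1 / 2 := by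
  simp [pairProj, vecMulVec_apply, hij, hij.symm]

lemma pairProj_mem_projSet {i j : Fin n} (hij : i ≠ j) : pairProj i j ∈ ProjSet n := by
  set v : Fin n → ℂ := Pi.single i 1 + Pi.single j 1
  have hv_dot : v ⬝ᵥ v = 2 := by norm_num [v, hij, hij.symm]
  refine ⟨?_, ?_⟩
  · simp [IsHermitian, pairProj, conjTranspose_smul]
  · rw [pairProj, smul_mul_smul, vecMulVec_mul_vecMulVec, hv_dot, vecMulVec_smul, smul_smul]
    norm_num

lemma pairProj_mem_blockDiagonalProjSet {c : Fin n → β} {i j : Fin n} (hij : i ≠ j)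
    (hc : c i = c j) : pairProj i j ∈ blockDiagonalProjSet c := by
  refine ⟨pairProj_mem_projSet hij, fun a b hab => ?_⟩
  have hv : ∀ a, c a ≠ c i → (Pi.single i 1 + Pi.single j 1 : Fin n → ℂ) a = 0 := fun a ha => by
    have hai : a ≠ i := fun h => ha (congrArg c h)
    have haj : a ≠ j := fun h => ha (hc ▸ congrArg c h)
    simp [hai, haj]
  simp only [pairProj, Matrix.smul_apply, vecMulVec_apply, smul_eq_mul, mul_eq_zero]
  by_cases ha : c a = c i
  · exact Or.inr (Or.inr (hv b fun hb => hab (ha.trans hb.symm)))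
  · exact Or.inr (Or.inl (hv a ha))

lemma isDiag_of_mem_projComm_blockDiagonalProjSet {c : Fin n → β} {R : Matrix (Fin n) (Fin n) ℂ}
    (hR : R ∈ ProjComm (blockDiagonalProjSet c)) : R.IsDiag := by
  intro a b hab
  have h := mul_diagonal_eq_diagonal_mul_iff.1
    (hR.2 _ (diagonal_single_mem_blockDiagonalProjSet c b)) a b
  simpa [Pi.single_apply, hab] using h

lemma apply_self_eq_of_mem_projComm_blockDiagonalProjSet {c : Fin n → β}
    {R : Matrix (Fin n) (Fin n) ℂ} (hR : R ∈ ProjComm (blockDiagonalProjSet c)) {i j : Fin n}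
    (hc : c i = c j) : R i i = R j j := by
  obtain rfl | hij := eq_or_ne i j
  · rfl
  have h := congr_fun₂ (hR.2 _ (pairProj_mem_blockDiagonalProjSet hij hc)) i j
  rw [← (isDiag_of_mem_projComm_blockDiagonalProjSet hR).diagonal_diag, diagonal_mul,
    mul_diagonal, pairProj_apply_left_right hij] at h
  simp only [diag_apply] at h
  linear_combination 2 * h

open Classical in
lemma projComm_blockDiagonalProjSet (c : Fin n → β) :
    ProjComm (blockDiagonalProjSet c) = Set.range (blockProj c) := by
  ext R
  refine ⟨fun hR => ?_, ?_⟩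
  · have hRd := (isDiag_of_mem_projComm_blockDiagonalProjSet hR).diagonal_diag
    have h01 : ∀ i, R i i = 0 ∨ R i i = 1 := fun i => by
      have h : (diagonal R.diag * diagonal R.diag) i i = R i i := by rw [hRd, hR.1.2]
      rw [diagonal_mul_diagonal, diagonal_apply_eq] at h
      exact IsIdempotentElem.iff_eq_zero_or_one.1 h
    refine ⟨fun b => decide (∃ i, c i = b ∧ R i i = 1), ?_⟩
    rw [← hRd, blockProj]
    congr with i
    by_cases hi : R i i = 1
    · simpa [hi] using ⟨i, rfl, hi⟩
    · have : ∀ k, c k = c i → R k k ≠ 1 := fun k hk =>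
        apply_self_eq_of_mem_projComm_blockDiagonalProjSet hR hk ▸ hi
      simpa [(h01 i).resolve_right hi] using this
  · rintro ⟨f, rfl⟩
    refine ⟨blockProj_mem_projSet c f, fun Q hQ => ?_⟩
    exact (blockProj_commute_of_mem_blockDiagonalProjSet hQ f).symm

end Block

theorem second_commutant_card_sixteen_general {n : ℕ}
    {P : Matrix (Fin n) (Fin n) ℂ}
    (hP : P ∈ ProjSet n) (hrk : 2 ≤ P.rank) (hcork : 2 ≤ n - P.rank) :
    ∃ Q ∈ ProjSet n, P * Q = Q * P ∧
      (ProjComm (ProjComm {P, Q})).ncard = 16 := by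
  obtain ⟨hherm, hidem⟩ := hP
  set φ := conjStarAlgAut ℂ _ hherm.eigenvectorUnitary
  set ev := hherm.eigenvalues
  have hrank := hherm.rank_eq_card_non_zero_eigs
  have hcorank : n - P.rank = Fintype.card {i // ¬ev i ≠ 0} := by
    rw [Fintype.card_subtype_compl, Fintype.card_fin, hrank]
  obtain ⟨q, hq⟩ := exists_surjective_prod_of_two_le_card (hrank ▸ hrk) (hcorank ▸ hcork)
  set c : Fin n → Bool × Bool := fun i => (decide (ev i ≠ 0), q i)
  have hPc : P = φ (blockProj c Prod.fst) := by
    rw [hherm.spectral_theorem, blockProj]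
    congr with i
    rcases hherm.eigenvalues_eq_zero_or_one hidem i with h | h <;> simp [c, ev, h]
  refine ⟨φ (blockProj c Prod.snd), (map_mem_projSet_iff φ).2 (blockProj_mem_projSet c _), ?_, ?_⟩
  · rw [hPc, ← map_mul, ← map_mul, blockProj, blockProj, (commute_diagonal _ _).eq]
  · have hPQ : {P, φ (blockProj c Prod.snd)} = φ '' (blockProj c '' {Prod.fst, Prod.snd}) := by
      simp only [Set.image_insert_eq, Set.image_singleton, hPc]
    rw [hPQ, ncard_projComm_projComm_image,
      projComm_image_blockProj (by simp),
      projComm_blockDiagonalProjSet, ncard_range_blockProj hq]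
    simp

theorem second_commutant_card_sixteen {n : ℕ} (hn : 4 ≤ n)
    {P : Matrix (Fin n) (Fin n) ℂ}
    (hP : P ∈ ProjSet n) (hrk : 2 ≤ P.rank) (hcork : 2 ≤ n - P.rank) :
    ∃ Q ∈ ProjSet n, P * Q = Q * P ∧
      (ProjComm (ProjComm {P, Q})).ncard = 16 :=
  second_commutant_card_sixteen_general hP hrk hcork
end

section
/- Two Hermitian matrices A and B have equal commutants (A' = B', where A' = {C Hermitian : AC = CA}) if and only if B = f(A) for some injective real-valued function f on the spectrum of A. -/
open Matrix ComplexOrder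

section Aux

variable {n : ℕ} [DecidableEq (Fin n)]

private lemma std_apply (i j k l : Fin n) (z : ℂ) :
    single i j z k l = if i = k ∧ j = l then z else 0 := by
  simp [single]

private lemma mul_std_apply (M : Matrix (Fin n) (Fin n) ℂ) (i j k l : Fin n) (z : ℂ) :
    (M * single i j z) k l = if j = l then M k i * z else 0 := by
  simp [mul_apply, single, ite_and, Finset.sum_ite_eq]

private lemma std_mul_apply (M : Matrix (Fin n) (Fin n) ℂ) (i j k l : Fin n) (z : ℂ) :
    (single i j z * M) k l = if i = k then z * M j l else 0 := by
  simp [mul_apply, single, ite_and, Finset.sum_ite_eq]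

private lemma pair_isHermitian (i j : Fin n) (z : ℂ) :
    (single i j z + single j i (starRingEnd ℂ z)).IsHermitian := by
  show _ᴴ = _
  ext k l
  simp only [conjTranspose_apply, Matrix.add_apply, std_apply, star_add, apply_ite (star : ℂ → ℂ),
    star_zero, RCLike.star_def, Complex.conj_conj]
  rw [add_comm]
  congr 1 <;> exact if_congr and_comm rfl rfl

private lemma conj_conj {V : Matrix (Fin n) (Fin n) ℂ} (hV2 : star V * V = 1)
    (C : Matrix (Fin n) (Fin n) ℂ) : star V * (V * C * star V) * V = C := by
  rw [show star V * (V * C * star V) * V = (star V * V) * C * (star V * V) by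
    simp only [mul_assoc], hV2, one_mul, mul_one]

private lemma conj_back {V : Matrix (Fin n) (Fin n) ℂ} (hV1 : V * star V = 1)
    (C : Matrix (Fin n) (Fin n) ℂ) : V * (star V * C * V) * star V = C := by
  rw [show V * (star V * C * V) * star V = (V * star V) * C * (V * star V) by
    simp only [mul_assoc], hV1, one_mul, mul_one]

private lemma isHermitian_conj {V C : Matrix (Fin n) (Fin n) ℂ} (h : C.IsHermitian) :
    (star V * C * V).IsHermitian := by
  show _ᴴ = _
  rw [conjTranspose_mul, conjTranspose_mul, h.eq, ← star_eq_conjTranspose,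
    ← star_eq_conjTranspose, star_star, mul_assoc]

private lemma comm_conj_iff {V : Matrix (Fin n) (Fin n) ℂ} (hV1 : V * star V = 1)
    (hV2 : star V * V = 1) (M C : Matrix (Fin n) (Fin n) ℂ) :
    (V * M * star V) * C = C * (V * M * star V) ↔
      M * (star V * C * V) = (star V * C * V) * M := by
  constructor
  · intro h
    have h2 := congrArg (fun X => star V * X * V) h
    simpa only [mul_assoc, show ∀ X : Matrix (Fin n) (Fin n) ℂ, V * (star V * X) = X from
        fun X => by rw [← mul_assoc, hV1, one_mul],
      show ∀ X : Matrix (Fin n) (Fin n) ℂ, star V * (V * X) = X from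
        fun X => by rw [← mul_assoc, hV2, one_mul], hV1, hV2, mul_one] using h2
  · intro h
    have h2 := congrArg (fun X => V * X * star V) h
    simpa only [mul_assoc, show ∀ X : Matrix (Fin n) (Fin n) ℂ, V * (star V * X) = X from
        fun X => by rw [← mul_assoc, hV1, one_mul],
      show ∀ X : Matrix (Fin n) (Fin n) ℂ, star V * (V * X) = X from
        fun X => by rw [← mul_assoc, hV2, one_mul], hV1, hV2, mul_one] using h2

private lemma comm_diagonal_iff (v : Fin n → ℂ) (C : Matrix (Fin n) (Fin n) ℂ) :
    diagonal v * C = C * diagonal v ↔ ∀ k l, v k = v l ∨ C k l = 0 := by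
  constructor
  · intro h k l
    have h1 := (Matrix.ext_iff.mpr h) k l
    rw [diagonal_mul, mul_diagonal] at h1
    rcases eq_or_ne (v k) (v l) with he | he
    · exact Or.inl he
    · refine Or.inr ?_
      have h2 : (v k - v l) * C k l = 0 := by rw [sub_mul, h1, mul_comm, sub_self]
      exact (mul_eq_zero.mp h2).resolve_left (sub_ne_zero.mpr he)
  · intro h
    ext k l
    rw [diagonal_mul, mul_diagonal]
    rcases h k l with he | he
    · rw [he, mul_comm]
    · rw [he, mul_zero, zero_mul]

private lemma diagonal_comm_pair {v : Fin n → ℂ} {i j : Fin n} (hv : v i = v j) (z w : ℂ) :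
    diagonal v * (single i j z + single j i w) =
      (single i j z + single j i w) * diagonal v := by
  ext k l
  rw [diagonal_mul, mul_diagonal]
  simp only [Matrix.add_apply, std_apply, mul_add, add_mul, mul_ite, ite_mul, mul_zero, zero_mul]
  refine congrArg₂ (· + ·) ?_ ?_
  · split_ifs with h
    · obtain ⟨rfl, rfl⟩ := h; rw [hv, mul_comm]
    · rfl
  · split_ifs with h
    · obtain ⟨rfl, rfl⟩ := h; rw [← hv, mul_comm]
    · rfl

private lemma pair_comm_entries {B' : Matrix (Fin n) (Fin n) ℂ} {i j : Fin n} {z w : ℂ}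
    (hij : i ≠ j)
    (hcomm : B' * (single i j z + single j i w) =
      (single i j z + single j i w) * B') :
    B' i j * w = z * B' j i ∧ B' i i * z = z * B' j j := by
  rw [mul_add, add_mul] at hcomm
  have e1 := (Matrix.ext_iff.mpr hcomm) i i
  have e2 := (Matrix.ext_iff.mpr hcomm) i j
  simp only [Matrix.add_apply, mul_std_apply, std_mul_apply, if_pos rfl, if_neg hij,
    if_neg (Ne.symm hij), zero_add, add_zero] at e1 e2
  exact ⟨e1, e2⟩

private lemma transfer {V : Matrix (Fin n) (Fin n) ℂ} (hV1 : V * star V = 1)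
    (hV2 : star V * V = 1) (M N : Matrix (Fin n) (Fin n) ℂ)
    (h : {C : Matrix (Fin n) (Fin n) ℂ | C.IsHermitian ∧
        (V * M * star V) * C = C * (V * M * star V)} ⊆
      {C : Matrix (Fin n) (Fin n) ℂ | C.IsHermitian ∧
        (V * N * star V) * C = C * (V * N * star V)}) :
    ∀ C', C'.IsHermitian → M * C' = C' * M → N * C' = C' * N := by
  intro C' h1 h2
  have hherm : (V * C' * star V).IsHermitian := by
    have := isHermitian_conj (V := star V) h1
    rwa [star_star] at this
  have hmem := h ⟨hherm, by rw [comm_conj_iff hV1 hV2, conj_conj hV2]; exact h2⟩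
  obtain ⟨-, hc⟩ := hmem
  rwa [comm_conj_iff hV1 hV2, conj_conj hV2] at hc

end Aux

theorem commutant_eq_iff_function_of {n : ℕ} [DecidableEq (Fin n)]
    {A B : Matrix (Fin n) (Fin n) ℂ}
    (hA : A.IsHermitian) (hB : B.IsHermitian) :
    {C : Matrix (Fin n) (Fin n) ℂ | C.IsHermitian ∧ A * C = C * A} =
      {C : Matrix (Fin n) (Fin n) ℂ | C.IsHermitian ∧ B * C = C * B} ↔
    ∃ f : ℝ → ℝ, Set.InjOn f (spectrum ℝ A) ∧ B = hA.cfc f := by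
  have hV1 : (hA.eigenvectorUnitary : Matrix (Fin n) (Fin n) ℂ) * star (hA.eigenvectorUnitary : Matrix (Fin n) (Fin n) ℂ) = 1 :=
    Unitary.coe_mul_star_self hA.eigenvectorUnitary
  have hV2 : star (hA.eigenvectorUnitary : Matrix (Fin n) (Fin n) ℂ) * (hA.eigenvectorUnitary : Matrix (Fin n) (Fin n) ℂ) = 1 :=
    Unitary.coe_star_mul_self hA.eigenvectorUnitary
  set V : Matrix (Fin n) (Fin n) ℂ := (hA.eigenvectorUnitary : Matrix (Fin n) (Fin n) ℂ) with hVdef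
  set d : Fin n → ℝ := hA.eigenvalues with hddef
  have hAeq : A = V * diagonal (fun k => (d k : ℂ)) * star V := by
    conv_lhs => rw [hA.spectral_theorem, Unitary.conjStarAlgAut_apply]
    rfl
  have hcfc : ∀ f : ℝ → ℝ, hA.cfc f = V * diagonal (fun k => (f (d k) : ℂ)) * star V := by
    intro f
    rw [IsHermitian.cfc, Unitary.conjStarAlgAut_apply]
    rfl
  constructor
  · intro h
    have hB' : (star V * B * V).IsHermitian := isHermitian_conj hB
    have hBeq : B = V * (star V * B * V) * star V := (conj_back hV1 B).symm
    set B' : Matrix (Fin n) (Fin n) ℂ := star V * B * V with hB'def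
    rw [hAeq, hBeq] at h
    have key : ∀ C', C'.IsHermitian → diagonal (fun k => (d k : ℂ)) * C' = C' * diagonal (fun k => (d k : ℂ)) → B' * C' = C' * B' :=
      transfer hV1 hV2 _ _ h.subset
    have key2 : ∀ C', C'.IsHermitian → B' * C' = C' * B' → diagonal (fun k => (d k : ℂ)) * C' = C' * diagonal (fun k => (d k : ℂ)) :=
      transfer hV1 hV2 _ _ h.symm.subset
    -- off-diagonal entries across distinct eigenvalues vanish
    have hzero : ∀ k l, d k ≠ d l → B' k l = 0 := by
      intro k l hkl
      have hcomm := key (diagonal fun m => if d m = d k then (1:ℂ) else 0)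
        (by
          show _ᴴ = _
          ext a b
          rw [conjTranspose_apply, diagonal_apply, diagonal_apply]
          rcases eq_or_ne a b with rfl | hab
          · simp [apply_ite (star : ℂ → ℂ)]
          · rw [if_neg hab, if_neg (Ne.symm hab), star_zero])
        (by
          rw [diagonal_mul_diagonal, diagonal_mul_diagonal]
          exact congrArg diagonal (funext fun m => mul_comm _ _))
      have h1 := (Matrix.ext_iff.mpr hcomm) k l
      rw [mul_diagonal, diagonal_mul] at h1
      simpa [Ne.symm hkl] using h1.symm
    -- pairs with equal eigenvalues
    have hpair : ∀ k l, k ≠ l → d k = d l →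
        B' k l = B' l k ∧ B' k l * (starRingEnd ℂ Complex.I) = Complex.I * B' l k ∧
          B' k k = B' l l := by
      intro k l hkl hd
      have hone := key (single k l 1 + single l k (starRingEnd ℂ 1))
        (pair_isHermitian k l 1)
        (diagonal_comm_pair (show ((d k : ℂ)) = (d l : ℂ) by exact_mod_cast hd) 1 _)
      have hi := key (single k l Complex.I + single l k (starRingEnd ℂ Complex.I))
        (pair_isHermitian k l Complex.I)
        (diagonal_comm_pair (show ((d k : ℂ)) = (d l : ℂ) by exact_mod_cast hd) Complex.I _)
      have p1 := pair_comm_entries hkl hone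
      have p2 := pair_comm_entries hkl hi
      simp only [_root_.map_one, mul_one, one_mul] at p1
      exact ⟨p1.1, p2.1, p1.2⟩
    have hoff : ∀ k l, k ≠ l → B' k l = 0 := by
      intro k l hkl
      rcases eq_or_ne (d k) (d l) with hd | hd
      · obtain ⟨e1, e2, -⟩ := hpair k l hkl hd
        rw [Complex.conj_I] at e2
        have e3 : B' k l = - B' l k := by
          have := mul_left_cancel₀ Complex.I_ne_zero
            (show Complex.I * B' k l = Complex.I * (- B' l k) by linear_combination -e2)
          exact this
        linear_combination (e1 + e3) / 2
      · exact hzero k l hd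
    have hreal : ∀ k, B' k k = ((B' k k).re : ℂ) := by
      intro k
      have hk := hB'.apply k k
      rw [RCLike.star_def] at hk
      exact (Complex.conj_eq_iff_re.mp hk).symm
    have hB'diag : B' = diagonal (fun k => ((B' k k).re : ℂ)) := by
      ext k l
      rcases eq_or_ne k l with rfl | hkl
      · rw [diagonal_apply_eq]; exact hreal k
      · rw [diagonal_apply_ne _ hkl]; exact hoff k l hkl
    have hbeq : ∀ k l, d k = d l → (B' k k).re = (B' l l).re := by
      intro k l hd
      rcases eq_or_ne k l with rfl | hkl
      · rfl
      · exact congrArg Complex.re (hpair k l hkl hd).2.2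
    have hfd : ∀ k : Fin n, (if hx : ∃ m, d m = d k then (B' hx.choose hx.choose).re else 0)
        = (B' k k).re := by
      intro k
      rw [dif_pos (⟨k, rfl⟩ : ∃ m, d m = d k)]
      exact hbeq _ _ (Exists.choose_spec (⟨k, rfl⟩ : ∃ m, d m = d k))
    refine ⟨fun x => if hx : ∃ k, d k = x then (B' hx.choose hx.choose).re else 0, ?_, ?_⟩
    · rw [hA.spectrum_real_eq_range_eigenvalues]
      rintro x ⟨k, rfl⟩ y ⟨l, rfl⟩ hxy
      simp only [] at hxy
      rw [hfd k, hfd l] at hxy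
      rcases eq_or_ne k l with rfl | hkl
      · rfl
      · have hcm : B' * (single k l 1 + single l k (starRingEnd ℂ 1)) =
            (single k l 1 + single l k (starRingEnd ℂ 1)) * B' := by
          rw [hB'diag]
          exact diagonal_comm_pair
            (show ((B' k k).re : ℂ) = ((B' l l).re : ℂ) by exact_mod_cast hxy) 1 _
        have hdcomm := key2 _ (pair_isHermitian k l 1) hcm
        have h1 := (Matrix.ext_iff.mpr hdcomm) k l
        rw [diagonal_mul, mul_diagonal] at h1
        simp [std_apply, hkl, Ne.symm hkl] at h1
        exact_mod_cast h1
    · have hgoal : B' = diagonal (fun k =>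
          (((if hx : ∃ m, d m = d k then (B' hx.choose hx.choose).re else 0 : ℝ)) : ℂ)) := by
        ext a b
        rcases eq_or_ne a b with rfl | hab
        · rw [diagonal_apply_eq, hfd a]
          exact hreal a
        · rw [diagonal_apply_ne _ hab]
          exact hoff a b hab
      rw [hcfc, hBeq, ← hgoal]
  · rintro ⟨f, hinj, rfl⟩
    ext C
    simp only [Set.mem_setOf_eq]
    have hmem : ∀ k, d k ∈ spectrum ℝ A := fun k => hA.eigenvalues_mem_spectrum_real k
    have hiff : ∀ k l, ((d k : ℂ) = (d l : ℂ)) ↔ ((f (d k) : ℂ) = (f (d l) : ℂ)) := by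
      intro k l
      rw [Complex.ofReal_inj, Complex.ofReal_inj]
      exact ⟨fun he => congrArg f he, fun he => hinj (hmem k) (hmem l) he⟩
    constructor
    · rintro ⟨h1, h2⟩
      refine ⟨h1, ?_⟩
      rw [hcfc f, comm_conj_iff hV1 hV2, comm_diagonal_iff]
      rw [hAeq, comm_conj_iff hV1 hV2, comm_diagonal_iff] at h2
      intro k l
      rcases h2 k l with he | he
      · exact Or.inl ((hiff k l).mp he)
      · exact Or.inr he
    · rintro ⟨h1, h2⟩
      refine ⟨h1, ?_⟩
      rw [hAeq, comm_conj_iff hV1 hV2, comm_diagonal_iff]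
      rw [hcfc f, comm_conj_iff hV1 hV2, comm_diagonal_iff] at h2
      intro k l
      rcases h2 k l with he | he
      · exact Or.inl ((hiff k l).mpr he)
      · exact Or.inr he
end
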